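/- arXiv:math/0605383 — 10 statements merged into one kernel-verified Lean document; each statement's English description precedes it below -/
import Mathlib

section
/- Let k ≥ 1 and let D := D^0 be the naive convolution matrix with parameter μ = 0. If the p-th iterated matrix C_p of the Fuchsian system Y' = CY satisfies C_p^k = 0, then the (kp+1)-st iterated matrix of the naive convolution system Y' = DY satisfies D_{kp+1} = 0. -/
/-- The iterated matrices of the system `Y' = C Y`: `iterMat d C 0 = C₁ = C` and
`iterMat d C m = C_{m+1} = ∂(C_m) + C_m · C`, where `∂ = d` is applied entrywise. -/
def iterMat {K : Type*} [Field K] {ι : Type*} [Fintype ι] [DecidableEq ι]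
    (d : K → K) (C : Matrix ι ι K) : ℕ → Matrix ι ι K
  | 0 => C
  | m + 1 => (iterMat d C m).map d + iterMat d C m * C

/-- The block matrix `B_k^μ`: zero outside the `k`-th block row, with `k`-th block row
`(A_1, …, A_{k-1}, A_k + μ·1, A_{k+1}, …, A_r)`. -/
def convBlock {K : Type*} [Field K] {n r : ℕ}
    (A : Fin r → Matrix (Fin n) (Fin n) K) (μ : K) (k : Fin r) :
    Matrix (Fin r × Fin n) (Fin r × Fin n) K :=
  fun p q =>
    if p.1 = k then A q.1 p.2 q.2 + (if q.1 = k ∧ p.2 = q.2 then μ else 0) else 0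

/-!
Write `D = V Π` and `C = Π V`, where `Π = (A_1 ⋯ A_r)` is the constant block row and `V` the
block column of the `(t - t_i)⁻¹ 1_n`. Since `∂Π = 0` and `Π D = C Π`, the operator
`Z ↦ ∂Z + Z D` acts on `Z Π` as `Z ↦ ∂Z + Z C` acts on `Z`, so `D_{kp+1} = (∂ + ·C)^{kp}(V) Π`.
In characteristic `p`, the Leibniz rule with binomial coefficients shows that `∂^p` is again a
derivation and that `(∂ + ·C)^p Z = ∂^p Z + Z C_p`. The `p`-th derivative of `(t - t_i)⁻¹` carries
the factor `p!`, so `∂^p` kills the entries of `V` and of `C`, hence of all `(∂ + ·C)^m V`, and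
therefore `(∂ + ·C)^{kp} V = V C_p^k = 0`.
-/

open Finset

section Leibniz

variable {M N P : Type*} [AddCommMonoid P] (β : M → N → P) (f : M → M) (g : N → N) (h : P →+ P)

theorem iterate_apply_eq_sum_choose_of_leibniz (hβ : ∀ x y, h (β x y) = β (f x) y + β x (g y))
    (n : ℕ) (x : M) (y : N) :
    h^[n] (β x y) = ∑ ij ∈ antidiagonal n, n.choose ij.1 • β (f^[ij.1] x) (g^[ij.2] y) := by
  induction n with
  | zero => simp
  | succ n ih =>
    rw [sum_antidiagonal_choose_succ_nsmul (fun i j => β (f^[i] x) (g^[j] y)) n]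
    simp only [Function.iterate_succ_apply', ih, map_sum, map_nsmul, hβ, smul_add,
      sum_add_distrib]
    rw [add_comm]
    congr 1
    refine sum_congr rfl fun ⟨i, j⟩ hij ↦ ?_
    rw [n.choose_symm_of_eq_add (mem_antidiagonal.1 hij).symm]

theorem iterate_prime_apply_of_leibniz (R : Type*) [Semiring R] [Module R P] {p : ℕ} [CharP R p]
    (hp : p.Prime) (hβ : ∀ x y, h (β x y) = β (f x) y + β x (g y)) (x : M) (y : N) :
    h^[p] (β x y) = β (f^[p] x) y + β x (g^[p] y) := by
  rw [iterate_apply_eq_sum_choose_of_leibniz β f g h hβ, add_comm,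
    sum_eq_add (0, p) (p, 0) (by simp [hp.ne_zero])]
  · simp
  · rintro ⟨i, j⟩ hij hne
    have hi0 : i ≠ 0 := by rintro rfl; simp_all
    have hip : i < p := by
      rw [HasAntidiagonal.mem_antidiagonal] at hij
      have : j ≠ 0 := by rintro rfl; simp_all
      omega
    obtain ⟨c, hc⟩ := hp.dvd_choose_self hi0 hip
    simp only [hc, mul_smul, ← Nat.cast_smul_eq_nsmul R p, CharP.cast_eq_zero, zero_smul]
  · simp
  · simp

end Leibniz

theorem Matrix.iterate_map {m n α : Type*} (f : α → α) (k : ℕ) (M : Matrix m n α) :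
    (fun M : Matrix m n α => M.map f)^[k] M = M.map f^[k] := by
  induction k generalizing M with
  | zero => rfl
  | succ k ih => rw [Function.iterate_succ_apply, ih, Matrix.map_map, Function.iterate_succ]

namespace Derivation

variable {R A : Type*} [CommRing R] [CommRing A] [Algebra R A] (D : Derivation R A A)

theorem iterate_prime_leibniz {p : ℕ} [CharP A p] (hp : p.Prime) (a b : A) :
    D^[p] (a * b) = D^[p] a * b + a * D^[p] b :=
  iterate_prime_apply_of_leibniz (· * ·) D D D A hp
    (fun x y => (D.leibniz x y).trans (by rw [smul_eq_mul, smul_eq_mul, add_comm, mul_comm y])) a b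

def iteratePrime {p : ℕ} [CharP A p] (hp : p.Prime) : Derivation R A A :=
  Derivation.mk' (D.toLinearMap ^ p) fun a b => by
    simp only [Module.End.pow_apply, coeFn_coe, iterate_prime_leibniz D hp, smul_eq_mul]
    ring

@[simp]
theorem coe_iteratePrime {p : ℕ} [CharP A p] (hp : p.Prime) : ⇑(D.iteratePrime hp) = (⇑D)^[p] :=
  funext fun a => Module.End.pow_apply _ _ a

variable {ι κ ν : Type*}

theorem map_matrix_mul [Fintype κ] (X : Matrix ι κ A) (Y : Matrix κ ν A) :
    (X * Y).map D = X.map D * Y + X * Y.map D := by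
  ext i j
  simp only [Matrix.map_apply, Matrix.add_apply, Matrix.mul_apply, map_sum, leibniz, smul_eq_mul,
    ← sum_add_distrib]
  exact sum_congr rfl fun _ _ => by ring

variable [Fintype κ]

def connection (C : Matrix κ κ A) : Matrix ι κ A →+ Matrix ι κ A where
  toFun Z := Z.map D + Z * C
  map_zero' := by simp
  map_add' X Y := by
    rw [Matrix.map_add _ (map_add D), Matrix.add_mul]
    abel

@[simp]
theorem connection_apply (C : Matrix κ κ A) (Z : Matrix ι κ A) :
    D.connection C Z = Z.map D + Z * C := rfl

theorem connection_one [DecidableEq κ] (C : Matrix κ κ A) : D.connection C 1 = C := by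
  have h1 : (1 : Matrix κ κ A).map D = 0 := by
    ext i j
    by_cases h : i = j <;> simp [h]
  simp [h1]

theorem connection_mul [Fintype ν] (C : Matrix ν ν A) (X : Matrix ι κ A) (Y : Matrix κ ν A) :
    D.connection C (X * Y) = X.map D * Y + X * D.connection C Y := by
  simp only [connection_apply, map_matrix_mul, Matrix.mul_add, Matrix.mul_assoc, add_assoc]

theorem iterate_connection_mul_of_connection_eq [Fintype ν] {C : Matrix κ κ A}
    {E : Matrix ν ν A} {P : Matrix κ ν A} (hP : D.connection E P = C * P) (m : ℕ)
    (X : Matrix ι κ A) :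
    (D.connection E)^[m] (X * P) = (D.connection C)^[m] X * P := by
  induction m generalizing X with
  | zero => rfl
  | succ m ih =>
    rw [Function.iterate_succ_apply, Function.iterate_succ_apply, ← ih, connection_mul, hP,
      connection_apply, Matrix.add_mul, Matrix.mul_assoc]

theorem map_connection_of_commute (D' : Derivation R A A) (hD' : ∀ a, D' (D a) = D (D' a))
    {C : Matrix κ κ A} (hC : C.map D' = 0) (Z : Matrix ι κ A) :
    (D.connection C Z).map D' = D.connection C (Z.map D') := by
  rw [connection_apply, connection_apply, Matrix.map_add _ (map_add D'), map_matrix_mul, hC,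
    Matrix.mul_zero, add_zero, Matrix.map_map, Matrix.map_map]
  congr 2
  exact funext hD'

-- Katz's formula: the `p`-th iterate of a connection is `∂^p` plus its `p`-curvature.
theorem iterate_connection_prime {p : ℕ} [CharP A p] (hp : p.Prime) [DecidableEq κ]
    (C : Matrix κ κ A) (X : Matrix ι κ A) :
    (D.connection C)^[p] X = X.map D^[p] + X * (D.connection C)^[p] 1 := by
  have h := iterate_prime_apply_of_leibniz (fun (Y : Matrix ι κ A) (Z : Matrix κ κ A) => Y * Z)
    (fun M : Matrix ι κ A => M.map D) (D.connection C) (D.connection C) A hp (D.connection_mul C) X 1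
  rwa [Matrix.mul_one, Matrix.mul_one, Matrix.iterate_map] at h

section Field

variable {R K : Type*} [CommRing R] [Field K] [Algebra R K] (D : Derivation R K K)

theorem iterate_inv_of_eq_one {u : K} (hu : D u = 1) (m : ℕ) :
    D^[m] u⁻¹ = ((-1) ^ m * m.factorial : ℤ) • u⁻¹ ^ (m + 1) := by
  induction m with
  | zero => simp
  | succ m ih =>
    rw [Function.iterate_succ_apply', ih, map_zsmul, D.leibniz_pow, D.leibniz_inv, hu]
    simp only [zsmul_eq_mul, nsmul_eq_mul, smul_eq_mul, Nat.factorial_succ]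
    push_cast
    ring

theorem iterate_prime_inv_of_eq_one {p : ℕ} [CharP K p] (hp : p.Prime) {u : K} (hu : D u = 1) :
    D^[p] u⁻¹ = 0 := by
  rw [iterate_inv_of_eq_one D hu, zsmul_eq_mul, Int.cast_mul, Int.cast_natCast,
    CharP.cast_eq_zero_iff K p _ |>.2 (Nat.dvd_factorial hp.pos le_rfl)]
  simp

variable {ι : Type*} [Fintype ι] [DecidableEq ι]

theorem iterMat_eq_iterate_connection (C : Matrix ι ι K) (m : ℕ) :
    iterMat D C m = (D.connection C)^[m] C := by
  induction m with
  | zero => rfl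
  | succ m ih => rw [Function.iterate_succ_apply', ← ih, connection_apply, iterMat]

theorem iterate_connection_prime_eq_iterMat {p : ℕ} [CharP K p] (hp : p.Prime) {κ : Type*}
    (C : Matrix ι ι K) (X : Matrix κ ι K) :
    (D.connection C)^[p] X = X.map D^[p] + X * iterMat D C (p - 1) := by
  have hp1 : (D.connection C)^[p] (1 : Matrix ι ι K) = (D.connection C)^[p - 1] C := by
    conv_lhs => rw [← Nat.sub_add_cancel hp.one_le]
    rw [Function.iterate_succ_apply, connection_one]
  rw [iterate_connection_prime D hp, hp1, iterMat_eq_iterate_connection]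
  rfl

theorem iterate_connection_mul_prime {p : ℕ} [CharP K p] (hp : p.Prime) {κ : Type*}
    {C : Matrix ι ι K} (hC : C.map D^[p] = 0) {X : Matrix κ ι K} (hX : X.map D^[p] = 0)
    (l : ℕ) : (D.connection C)^[l * p] X = X * iterMat D C (p - 1) ^ l := by
  have hcomm : Function.Commute (fun Z : Matrix κ ι K => Z.map D^[p]) (D.connection C) :=
    fun Z => by
      simpa using D.map_connection_of_commute (D.iteratePrime hp)
        (fun a => by simpa using (Function.Commute.self_iterate D p a).symm)
        (by simpa using hC) Z
  induction l with
  | zero => simp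
  | succ l ih =>
    have hconst : ((D.connection C)^[l * p] X).map D^[p] = 0 := by
      rw [(hcomm.iterate_right (l * p)).eq, hX, iterate_map_zero]
    rw [add_mul, one_mul, add_comm, Function.iterate_add_apply,
      iterate_connection_prime_eq_iterMat D hp, hconst, zero_add, ih, pow_succ, Matrix.mul_assoc]

end Field

end Derivation

namespace Matrix

variable {ι m R : Type*}

def blockRow (A : ι → Matrix m m R) : Matrix m (ι × m) R :=
  of fun a q => A q.1 a q.2

def blockCol (B : ι → Matrix m m R) : Matrix (ι × m) m R :=
  of fun q b => B q.1 q.2 b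

theorem blockRow_mul_blockCol [Fintype ι] [Fintype m] [NonUnitalNonAssocSemiring R]
    (A B : ι → Matrix m m R) : blockRow A * blockCol B = ∑ i, A i * B i := by
  ext a b
  simp [blockRow, blockCol, mul_apply, sum_apply, Fintype.sum_prod_type]

end Matrix

open Matrix in
theorem blockCol_smul_one_mul_blockRow {K : Type*} [Field K] {n r : ℕ} (w : Fin r → K)
    (A : Fin r → Matrix (Fin n) (Fin n) K) :
    blockCol (fun j => w j • (1 : Matrix (Fin n) (Fin n) K)) * blockRow A =
      ∑ j, w j • convBlock A 0 j := by
  ext ⟨j, a⟩ ⟨i, b⟩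
  simp [blockRow, blockCol, mul_apply, Matrix.sum_apply, convBlock, one_apply]

theorem naive_convolution_iterated_matrix_vanishes_general
    {K : Type*} [Field K] {p : ℕ} (hp : p.Prime) [CharP K p]
    (d : K → K) (hd_add : ∀ a b : K, d (a + b) = d a + d b)
    (hd_mul : ∀ a b : K, d (a * b) = a * d b + d a * b)
    {n r : ℕ} (t : K) (ht : d t = 1)
    (ts : Fin r → K) (hts : ∀ i, d (ts i) = 0)
    (A : Fin r → Matrix (Fin n) (Fin n) K) (hA : ∀ i a b, d (A i a b) = 0)
    (k : ℕ)
    (hC : (iterMat d (∑ i, (t - ts i)⁻¹ • A i) (p - 1)) ^ k = 0) :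
    iterMat d (∑ j, (t - ts j)⁻¹ • convBlock A (0 : K) j) (k * p) = 0 := by
  obtain ⟨δ, rfl⟩ : ∃ δ : Derivation ℤ K K, ⇑δ = d :=
    ⟨Derivation.mk' (AddMonoidHom.mk' d hd_add).toIntLinearMap fun a b => by
      simp only [AddMonoidHom.coe_toIntLinearMap, AddMonoidHom.mk'_apply, hd_mul, smul_eq_mul]
      ring, rfl⟩
  set row := Matrix.blockRow A
  set col := Matrix.blockCol fun j => (t - ts j)⁻¹ • (1 : Matrix (Fin n) (Fin n) K)
  have hrow : row.map δ = 0 := by ext; simp [row, Matrix.blockRow, hA]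
  have hrowp : row.map δ^[p] = 0 := by
    obtain ⟨m, hm⟩ := Nat.exists_eq_succ_of_ne_zero hp.ne_zero
    rw [hm, Function.iterate_succ, ← Matrix.map_map, hrow]
    ext; simp
  have hcolp : col.map δ^[p] = 0 := by
    ext ⟨i, a⟩ b
    have hinv := δ.iterate_prime_inv_of_eq_one hp (u := t - ts i) (by simp [ht, hts])
    by_cases hab : a = b <;> simp [col, Matrix.blockCol, Matrix.one_apply, hab, hinv]
  have hCfac : ∑ i, (t - ts i)⁻¹ • A i = row * col := by
    simp [row, col, Matrix.blockRow_mul_blockCol]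
  have hCp : (row * col).map δ^[p] = 0 := by
    simpa [hrowp, hcolp] using (δ.iteratePrime hp).map_matrix_mul row col
  have hconn : δ.connection (col * row) row = (row * col) * row := by
    simp [hrow, Matrix.mul_assoc]
  rw [hCfac] at hC
  rw [← blockCol_smul_one_mul_blockRow]
  calc iterMat δ (col * row) (k * p) = (δ.connection (col * row))^[k * p] (col * row) :=
        δ.iterMat_eq_iterate_connection _ _
    _ = (δ.connection (row * col))^[k * p] col * row :=
        δ.iterate_connection_mul_of_connection_eq hconn _ _
    _ = 0 := by rw [δ.iterate_connection_mul_prime hp hCp hcolp, hC]; simp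

/-- If `C_p^k = 0` for the Fuchsian system `C = ∑ (t - tᵢ)⁻¹ Aᵢ`, then `D_{kp+1} = 0`
for the naive convolution `D = D^0 = ∑ (t - t_k)⁻¹ B_k^0` with parameter `μ = 0`. -/
theorem naive_convolution_iterated_matrix_vanishes
    {K : Type*} [Field K] {p : ℕ} (hp : p.Prime) [CharP K p]
    (d : K → K) (hd_add : ∀ a b : K, d (a + b) = d a + d b)
    (hd_mul : ∀ a b : K, d (a * b) = a * d b + d a * b)
    {n r : ℕ} (t : K) (ht : d t = 1)
    (ts : Fin r → K) (hts : ∀ i, d (ts i) = 0)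
    (hdist : Function.Injective ts) (htne : ∀ i, t ≠ ts i)
    (A : Fin r → Matrix (Fin n) (Fin n) K) (hA : ∀ i a b, d (A i a b) = 0)
    (k : ℕ) (hk : 1 ≤ k)
    (hC : (iterMat d (∑ i, (t - ts i)⁻¹ • A i) (p - 1)) ^ k = 0) :
    iterMat d (∑ j, (t - ts j)⁻¹ • convBlock A (0 : K) j) (k * p) = 0 :=
  naive_convolution_iterated_matrix_vanishes_general hp d hd_add hd_mul t ht ts hts A hA k hC
end

section
/- For every m ≥ 1, the m-th iterated matrix of the Okubo system Y' = CY is given by the closed formula C_m = (t·1 − T)^{-1}(B − (m−1)) · (t·1 − T)^{-1}(B − (m−2)) · ⋯ · (t·1 − T)^{-1}(B − 1) · (t·1 − T)^{-1}B, i.e. C_m is the product, taken from left to right over j = m−1 down to j = 0, of the factors (t·1 − T)^{-1}(B − j·1). -/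
section OkuboAux

variable {K : Type*} [Field K]

lemma okubo_d_zero (d : K → K) (hd_add : ∀ a b : K, d (a + b) = d a + d b) : d 0 = 0 := by
  have h : d 0 = d 0 + d 0 := by simpa using (hd_add 0 0).symm
  exact (left_eq_add.mp h)

lemma okubo_d_one (d : K → K) (hd_mul : ∀ a b : K, d (a * b) = a * d b + d a * b) :
    d 1 = 0 := by
  have h : d 1 = d 1 + d 1 := by simpa using (hd_mul 1 1).symm
  exact (left_eq_add.mp h)

lemma okubo_d_natCast (d : K → K) (hd_add : ∀ a b : K, d (a + b) = d a + d b)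
    (hd_mul : ∀ a b : K, d (a * b) = a * d b + d a * b) (m : ℕ) : d (m : K) = 0 := by
  induction m with
  | zero => simpa using okubo_d_zero d hd_add
  | succ k ih =>
      have h : d ((k : K) + 1) = d (k : K) + d 1 := hd_add _ _
      rw [ih, okubo_d_one d hd_mul] at h
      simpa using h

lemma okubo_d_sub (d : K → K) (hd_add : ∀ a b : K, d (a + b) = d a + d b) (a b : K) :
    d (a - b) = d a - d b := by
  have h := hd_add (a - b) b
  rw [sub_add_cancel] at h
  exact eq_sub_of_add_eq h.symm

variable {n : ℕ}

lemma okubo_map_add (d : K → K) (hd_add : ∀ a b : K, d (a + b) = d a + d b)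
    (X Y : Matrix (Fin n) (Fin n) K) : (X + Y).map d = X.map d + Y.map d := by
  ext i j
  simp [Matrix.map_apply, hd_add]

lemma okubo_map_mul (d : K → K) (hd_add : ∀ a b : K, d (a + b) = d a + d b)
    (hd_mul : ∀ a b : K, d (a * b) = a * d b + d a * b)
    (X Y : Matrix (Fin n) (Fin n) K) :
    (X * Y).map d = X.map d * Y + X * Y.map d := by
  ext i j
  have hsum : d (∑ k, X i k * Y k j) = ∑ k, d (X i k * Y k j) :=
    map_sum (AddMonoidHom.mk' d hd_add) _ _
  simp only [Matrix.map_apply, Matrix.mul_apply, Matrix.add_apply, hsum]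
  rw [← Finset.sum_add_distrib]
  refine Finset.sum_congr rfl fun k _ => ?_
  rw [hd_mul]
  ring

/-- the product appearing in the closed formula -/
def okuboProd (M B : Matrix (Fin n) (Fin n) K) (m : ℕ) : Matrix (Fin n) (Fin n) K :=
  (((List.range m).reverse).map (fun j : ℕ => M * (B - (j : K) • 1))).prod

lemma okuboProd_zero (M B : Matrix (Fin n) (Fin n) K) : okuboProd M B 0 = 1 := by
  simp [okuboProd]

lemma okuboProd_succ (M B : Matrix (Fin n) (Fin n) K) (m : ℕ) :
    okuboProd M B (m + 1) = M * (B - (m : K) • 1) * okuboProd M B m := by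
  simp [okuboProd, List.range_succ]

lemma okubo_key (d : K → K) (hd_add : ∀ a b : K, d (a + b) = d a + d b)
    (hd_mul : ∀ a b : K, d (a * b) = a * d b + d a * b)
    (M B : Matrix (Fin n) (Fin n) K)
    (hM : M.map d = -(M * M)) (hB : B.map d = 0) :
    ∀ m : ℕ, (okuboProd M B m).map d =
      M * (B - (m : K) • 1) * okuboProd M B m - okuboProd M B m * (M * B) := by
  have hconst : ∀ m : ℕ, (B - (m : K) • (1 : Matrix (Fin n) (Fin n) K)).map d = 0 := by
    intro m
    ext i j
    simp only [Matrix.map_apply, Matrix.sub_apply, Matrix.smul_apply, Matrix.one_apply,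
      Matrix.zero_apply, smul_eq_mul]
    rw [okubo_d_sub d hd_add]
    have hBij : d (B i j) = 0 := by
      have := congrFun (congrFun hB i) j
      simpa [Matrix.map_apply] using this
    rw [hBij]
    rcases eq_or_ne i j with h | h
    · simp [h, hd_mul, okubo_d_one d hd_mul, okubo_d_natCast d hd_add hd_mul]
    · simp [h, okubo_d_zero d hd_add]
  intro m
  induction m with
  | zero =>
      have h1 : (1 : Matrix (Fin n) (Fin n) K).map d = 0 := by
        ext i j
        simp only [Matrix.map_apply, Matrix.one_apply, Matrix.zero_apply]
        rcases eq_or_ne i j with h | h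
        · simp [h, okubo_d_one d hd_mul]
        · simp [h, okubo_d_zero d hd_add]
      simp [okuboProd_zero, h1]
  | succ k ih =>
      have hF : (M * (B - (k : K) • 1)).map d = -(M * (M * (B - (k : K) • 1))) := by
        rw [okubo_map_mul d hd_add hd_mul, hconst, hM, mul_zero, add_zero]
        generalize B - (k : K) • (1 : Matrix (Fin n) (Fin n) K) = S
        noncomm_ring
      have hcast : ((k + 1 : ℕ) : K) • (1 : Matrix (Fin n) (Fin n) K) =
          (k : K) • 1 + 1 := by
        push_cast
        rw [add_smul, one_smul]
      rw [okuboProd_succ, okubo_map_mul d hd_add hd_mul, hF, ih, hcast]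
      generalize okuboProd M B k = P
      generalize (k : K) • (1 : Matrix (Fin n) (Fin n) K) = S
      noncomm_ring

end OkuboAux

/-- Closed formula for the iterated matrices of the Okubo system
`Y' = (t·1 - T)⁻¹ B Y`:
`C_m = (t·1-T)⁻¹(B-(m-1)) · (t·1-T)⁻¹(B-(m-2)) ⋯ (t·1-T)⁻¹(B-1) · (t·1-T)⁻¹ B`. -/
theorem okubo_iterated_matrix_closed_formula
    {K : Type*} [Field K]
    (d : K → K) (hd_add : ∀ a b : K, d (a + b) = d a + d b)
    (hd_mul : ∀ a b : K, d (a * b) = a * d b + d a * b)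
    {n : ℕ} (t : K) (ht : d t = 1)
    (ts : Fin n → K) (hts : ∀ i, d (ts i) = 0) (htne : ∀ i, t ≠ ts i)
    (B : Matrix (Fin n) (Fin n) K) (hB : ∀ a b, d (B a b) = 0) :
    ∀ m : ℕ, 1 ≤ m →
      iterMat d ((t • (1 : Matrix (Fin n) (Fin n) K) - Matrix.diagonal ts)⁻¹ * B) (m - 1) =
        (((List.range m).reverse).map (fun j : ℕ =>
          (t • (1 : Matrix (Fin n) (Fin n) K) - Matrix.diagonal ts)⁻¹ *
            (B - (j : K) • (1 : Matrix (Fin n) (Fin n) K)))).prod := by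
  set A : Matrix (Fin n) (Fin n) K := t • 1 - Matrix.diagonal ts with hAdef
  set M : Matrix (Fin n) (Fin n) K := A⁻¹ with hMdef
  -- A is the diagonal matrix with entries t - ts i
  have hAdiag : A = Matrix.diagonal (fun i => t - ts i) := by
    ext i j
    rcases eq_or_ne i j with h | h
    · simp [hAdef, Matrix.one_apply, Matrix.diagonal, h]
    · simp [hAdef, Matrix.one_apply, Matrix.diagonal_apply_ne _ h, h]
  have hdet : IsUnit A.det := by
    rw [hAdiag, Matrix.det_diagonal]
    exact (Finset.prod_ne_zero_iff.mpr fun i _ => sub_ne_zero_of_ne (htne i)).isUnit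
  have hAM : A * M = 1 := Matrix.mul_nonsing_inv A hdet
  have hMA : M * A = 1 := Matrix.nonsing_inv_mul A hdet
  -- ∂A = 1
  have hAd : A.map d = 1 := by
    rw [hAdiag]
    ext i j
    rcases eq_or_ne i j with h | h
    · simp [Matrix.map_apply, Matrix.diagonal, h, okubo_d_sub d hd_add, ht, hts,
        Matrix.one_apply]
    · simp [Matrix.map_apply, Matrix.diagonal_apply_ne _ h, h, okubo_d_zero d hd_add,
        Matrix.one_apply_ne h]
  -- ∂M = -M²
  have hMd : M.map d = -(M * M) := by
    have h1 : (1 : Matrix (Fin n) (Fin n) K).map d = 0 := by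
      ext i j
      rcases eq_or_ne i j with h | h
      · simp [Matrix.map_apply, Matrix.one_apply, h, okubo_d_one d hd_mul]
      · simp [Matrix.map_apply, Matrix.one_apply_ne h, okubo_d_zero d hd_add]
    have h2 : A.map d * M + A * M.map d = 0 := by
      rw [← okubo_map_mul d hd_add hd_mul, hAM, h1]
    rw [hAd, one_mul] at h2
    have h3 : A * M.map d = -M := by linear_combination (norm := noncomm_ring) h2
    calc M.map d = (M * A) * M.map d := by rw [hMA, one_mul]
      _ = M * (A * M.map d) := by rw [Matrix.mul_assoc]
      _ = -(M * M) := by rw [h3]; noncomm_ring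
  have hBd : B.map d = 0 := by
    ext i j
    simp [Matrix.map_apply, hB]
  have key := okubo_key d hd_add hd_mul M B hMd hBd
  -- main induction
  have main : ∀ k : ℕ, iterMat d (M * B) k = okuboProd M B (k + 1) := by
    intro k
    induction k with
    | zero => simp [iterMat, okuboProd_succ, okuboProd_zero]
    | succ j ih =>
        show (iterMat d (M * B) j).map d + iterMat d (M * B) j * (M * B) = _
        rw [ih, key, okuboProd_succ M B (j + 1)]
        ring_nf
        noncomm_ring
  intro m hm
  obtain ⟨k, rfl⟩ := Nat.exists_eq_add_of_le' hm
  simpa [okuboProd] using main k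
end

section
/- Suppose in addition that K has characteristic p for a prime number p. Then the p-th iterated matrix (the p-curvature) of the Okubo system Y' = CY is given by C_p = (t·1 − T)^{-1}(B + 1) · (t·1 − T)^{-1}(B + 2) · ⋯ · (t·1 − T)^{-1}(B + (p−1)) · (t·1 − T)^{-1}B, i.e. C_p is the product, from left to right over j = 1 up to j = p−1, of the factors (t·1 − T)^{-1}(B + j·1), followed by the rightmost factor (t·1 − T)^{-1}B. -/
/-!
Write `A = t·1 − T`. Since `A' = 1`, differentiating `A⁻¹A = 1` gives `(A⁻¹)' = −A⁻²`, and as `B`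
is constant an induction yields the recursion `C_{k+1} = A⁻¹(B − k)·C_k`. Hence
`C_p = A⁻¹(B − (p−1)) ⋯ A⁻¹(B − 1)·A⁻¹B`, and in characteristic `p` the shift `−(p − 1 − j)` is
`j + 1`.
-/

open Matrix

def Derivation.ofAddLeibniz {K : Type*} [CommRing K] (d : K → K)
    (hd_add : ∀ a b : K, d (a + b) = d a + d b)
    (hd_mul : ∀ a b : K, d (a * b) = a * d b + d a * b) : Derivation ℤ K K :=
  Derivation.mk' (AddMonoidHom.mk' d hd_add).toIntLinearMap fun a b => by
    simp [hd_mul, mul_comm]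

namespace Derivation

variable {R A : Type*} [CommRing R] [CommRing A] [Algebra R A] (D : Derivation R A A)

theorem matrix_map_mul {l m n : Type*} [Fintype m] (X : Matrix l m A) (Y : Matrix m n A) :
    (X * Y).map D = X.map D * Y + X * Y.map D := by
  ext i k
  simp only [Matrix.map_apply, mul_apply, Matrix.add_apply, map_sum, leibniz, smul_eq_mul,
    ← Finset.sum_add_distrib]
  exact Finset.sum_congr rfl fun j _ => by ring

theorem matrix_map_sub_natCast_smul_one {n : Type*} [DecidableEq n] (X : Matrix n n A) (k : ℕ) :
    (X - (k : A) • (1 : Matrix n n A)).map D = X.map D := by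
  ext i j
  by_cases h : i = j <;> simp [one_apply, h, map_sub, D.map_natCast]

theorem matrix_map_inv {n : Type*} [Fintype n] [DecidableEq n] {M : Matrix n n A}
    (hM : IsUnit M.det) : M⁻¹.map D = -(M⁻¹ * M.map D * M⁻¹) := by
  have h : M⁻¹.map D * M + M⁻¹ * M.map D = 0 := by
    rw [← matrix_map_mul, nonsing_inv_mul M hM, ← diagonal_one, diagonal_map (map_zero D),
      D.map_one_eq_zero, diagonal_zero]
  calc M⁻¹.map D = (M⁻¹.map D * M + M⁻¹ * M.map D) * M⁻¹ - M⁻¹ * M.map D * M⁻¹ := by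
        rw [add_mul, mul_assoc, mul_nonsing_inv M hM, mul_one, add_sub_cancel_right]
    _ = -(M⁻¹ * M.map D * M⁻¹) := by rw [h, zero_mul, zero_sub]

end Derivation

section IterMat

variable {R K : Type*} [CommRing R] [Field K] [Algebra R K] (D : Derivation R K K)
  {ι : Type*} [Fintype ι] [DecidableEq ι] {P B : Matrix ι ι K}

theorem iterMat_succ_succ_of_eq {C E : Matrix ι ι K} (hP : P.map D = -(P * P))
    (hE : E.map D = 0) {m : ℕ} (h : iterMat D C (m + 1) = P * E * iterMat D C m) :
    iterMat D C (m + 2) = P * (E - 1) * iterMat D C (m + 1) := by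
  have hm : (iterMat D C m).map D = P * E * iterMat D C m - iterMat D C m * C :=
    eq_sub_of_add_eq h
  change (iterMat D C (m + 1)).map D + iterMat D C (m + 1) * C = _
  rw [h, D.matrix_map_mul, D.matrix_map_mul, hP, hE, hm]
  noncomm_ring

theorem iterMat_succ (hP : P.map D = -(P * P)) (hB : B.map D = 0) (m : ℕ) :
    iterMat D (P * B) (m + 1) = P * (B - ((m + 1 : ℕ) : K) • 1) * iterMat D (P * B) m := by
  induction m with
  | zero =>
    change (P * B).map D + P * B * (P * B) = P * (B - ((0 + 1 : ℕ) : K) • 1) * (P * B)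
    rw [D.matrix_map_mul, hP, hB, Nat.cast_one, one_smul]
    noncomm_ring
  | succ m ih =>
    refine iterMat_succ_succ_of_eq D hP ?_ ih |>.trans ?_
    · rw [D.matrix_map_sub_natCast_smul_one, hB]
    · congr 2
      push_cast
      simp only [add_smul, one_smul, sub_add_eq_sub_sub]

theorem iterMat_eq_prod (hP : P.map D = -(P * P)) (hB : B.map D = 0) (m : ℕ) :
    iterMat D (P * B) m =
      ((List.range m).map fun j => P * (B - ((m - j : ℕ) : K) • 1)).prod * (P * B) := by
  induction m with
  | zero => simp [iterMat]
  | succ m ih =>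
    rw [iterMat_succ D hP hB, ih, List.prod_range_succ']
    simp only [Nat.sub_zero, Nat.succ_sub_succ, mul_assoc]

end IterMat

theorem Matrix.smul_one_sub_diagonal {α ι : Type*} [Ring α] [DecidableEq ι] (t : α)
    (ts : ι → α) : t • (1 : Matrix ι ι α) - diagonal ts = diagonal fun i => t - ts i := by
  rw [smul_one_eq_diagonal, diagonal_sub]

theorem Derivation.matrix_map_inv_smul_one_sub_diagonal {R K : Type*} [CommRing R] [Field K]
    [Algebra R K] (D : Derivation R K K) {ι : Type*} [Fintype ι] [DecidableEq ι]
    {t : K} (ht : D t = 1) {ts : ι → K} (hts : ∀ i, D (ts i) = 0) (htne : ∀ i, t ≠ ts i) :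
    (t • (1 : Matrix ι ι K) - diagonal ts)⁻¹.map D =
      -((t • 1 - diagonal ts)⁻¹ * (t • 1 - diagonal ts)⁻¹) := by
  have hdet : IsUnit (t • (1 : Matrix ι ι K) - diagonal ts).det := by
    rw [smul_one_sub_diagonal, det_diagonal, isUnit_iff_ne_zero]
    exact Finset.prod_ne_zero_iff.mpr fun i _ => sub_ne_zero.mpr (htne i)
  have hmap : (t • (1 : Matrix ι ι K) - diagonal ts).map D = 1 := by
    simp only [smul_one_sub_diagonal, diagonal_map (map_zero D), map_sub, ht, hts, sub_zero,
      diagonal_one]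
  rw [D.matrix_map_inv hdet, hmap, mul_one]

theorem CharP.natCast_sub_eq_neg {R : Type*} [Ring R] (p : ℕ) [CharP R p] {k : ℕ}
    (hk : k ≤ p) :
    ((p - k : ℕ) : R) = -k := by
  rw [Nat.cast_sub hk, CharP.cast_eq_zero, zero_sub]

theorem okubo_pCurvature_closed_formula_general
    {K : Type*} [Field K] {p : ℕ} [CharP K p]
    (d : K → K) (hd_add : ∀ a b : K, d (a + b) = d a + d b)
    (hd_mul : ∀ a b : K, d (a * b) = a * d b + d a * b)
    {n : ℕ} (t : K) (ht : d t = 1)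
    (ts : Fin n → K) (hts : ∀ i, d (ts i) = 0) (htne : ∀ i, t ≠ ts i)
    (B : Matrix (Fin n) (Fin n) K) (hB : ∀ a b, d (B a b) = 0) :
    iterMat d ((t • (1 : Matrix (Fin n) (Fin n) K) - Matrix.diagonal ts)⁻¹ * B) (p - 1) =
      (((List.range (p - 1)).map (fun j : ℕ =>
        (t • (1 : Matrix (Fin n) (Fin n) K) - Matrix.diagonal ts)⁻¹ *
          (B + ((j : K) + 1) • (1 : Matrix (Fin n) (Fin n) K)))).prod) *
        ((t • (1 : Matrix (Fin n) (Fin n) K) - Matrix.diagonal ts)⁻¹ * B) := by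
  let D := Derivation.ofAddLeibniz d hd_add hd_mul
  have hB_const : B.map D = 0 := by ext a b; exact hB a b
  have hAinv := D.matrix_map_inv_smul_one_sub_diagonal ht hts htne
  refine (iterMat_eq_prod D hAinv hB_const (p - 1)).trans ?_
  congr 2
  refine List.map_congr_left fun j hj => ?_
  have hjp : j + 1 ≤ p := by rw [List.mem_range] at hj; omega
  rw [Nat.sub_sub, add_comm 1 j, CharP.natCast_sub_eq_neg p hjp]
  push_cast
  rw [neg_smul, sub_neg_eq_add]

/-- In characteristic `p`, the `p`-curvature of the Okubo system `Y' = (t·1-T)⁻¹ B Y` is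
`C_p = (t·1-T)⁻¹(B+1) · (t·1-T)⁻¹(B+2) ⋯ (t·1-T)⁻¹(B+(p-1)) · (t·1-T)⁻¹ B`. -/
theorem okubo_pCurvature_closed_formula
    {K : Type*} [Field K] {p : ℕ} (hp : p.Prime) [CharP K p]
    (d : K → K) (hd_add : ∀ a b : K, d (a + b) = d a + d b)
    (hd_mul : ∀ a b : K, d (a * b) = a * d b + d a * b)
    {n : ℕ} (t : K) (ht : d t = 1)
    (ts : Fin n → K) (hts : ∀ i, d (ts i) = 0) (htne : ∀ i, t ≠ ts i)
    (B : Matrix (Fin n) (Fin n) K) (hB : ∀ a b, d (B a b) = 0) :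
    iterMat d ((t • (1 : Matrix (Fin n) (Fin n) K) - Matrix.diagonal ts)⁻¹ * B) (p - 1) =
      (((List.range (p - 1)).map (fun j : ℕ =>
        (t • (1 : Matrix (Fin n) (Fin n) K) - Matrix.diagonal ts)⁻¹ *
          (B + ((j : K) + 1) • (1 : Matrix (Fin n) (Fin n) K)))).prod) *
        ((t • (1 : Matrix (Fin n) (Fin n) K) - Matrix.diagonal ts)⁻¹ * B) :=
  okubo_pCurvature_closed_formula_general d hd_add hd_mul t ht ts hts htne B hB
end

section
/- Suppose in addition that K has characteristic p for a prime number p. Let C := (t·1 − T)^{-1}B and let C̃ := (t·1 − T)^{-1}(B − 1) be the shifted Okubo system. Then for every k ≥ 1, one has (C̃_p)^k · C = C_{kp+1}, where C̃_p is the p-th iterated matrix of the system Y' = C̃Y and C_{kp+1} is the (kp+1)-st iterated matrix of the system Y' = CY. -/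
section Aux

variable {K : Type*} [Field K] {ι : Type*} [Fintype ι] [DecidableEq ι]

lemma iterMat_succ_s4 (d : K → K) (C : Matrix ι ι K) (m : ℕ) :
    iterMat d C (m + 1) = (iterMat d C m).map d + iterMat d C m * C := rfl

variable {d : K → K} (hd_add : ∀ a b : K, d (a + b) = d a + d b)
    (hd_mul : ∀ a b : K, d (a * b) = a * d b + d a * b)

private def dh (hd_add : ∀ a b : K, d (a + b) = d a + d b) : K →+ K :=
  AddMonoidHom.mk' d hd_add

include hd_add hd_mul

private lemma d_one : d (1 : K) = 0 := by
  have h := hd_mul 1 1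
  simp only [one_mul, mul_one] at h
  have h2 : d 1 + 0 = d 1 + d 1 := by rw [add_zero]; exact h
  exact (add_left_cancel h2).symm

private lemma d_zero : d (0 : K) = 0 := map_zero (dh hd_add)

private lemma d_natCast (m : ℕ) : d ((m : ℕ) : K) = 0 := by
  induction m with
  | zero => exact_mod_cast d_zero hd_add hd_mul
  | succ m ih =>
      have : ((m + 1 : ℕ) : K) = ((m : ℕ) : K) + 1 := by push_cast; ring
      rw [this, hd_add, ih, d_one hd_add hd_mul, add_zero]

private lemma mapd_one : (1 : Matrix ι ι K).map d = 0 := by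
  ext i j
  by_cases h : i = j <;>
    simp [Matrix.map_apply, Matrix.one_apply, h, d_one hd_add hd_mul,
      d_zero hd_add hd_mul]

private lemma mapd_sub (X Y : Matrix ι ι K) : (X - Y).map d = X.map d - Y.map d := by
  ext i j
  exact map_sub (dh hd_add) _ _

private lemma mapd_mul (X Y : Matrix ι ι K) :
    (X * Y).map d = X.map d * Y + X * Y.map d := by
  ext i j
  simp only [Matrix.map_apply, Matrix.mul_apply, Matrix.add_apply]
  have hs : d (∑ k, X i k * Y k j) = ∑ k, d (X i k * Y k j) :=
    map_sum (dh hd_add) _ _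
  rw [hs, Finset.sum_congr rfl fun k _ => hd_mul (X i k) (Y k j),
    Finset.sum_add_distrib]
  exact add_comm _ _

private lemma mapd_cast_smul_one (m : ℕ) :
    (((m : ℕ) : K) • (1 : Matrix ι ι K)).map d = 0 := by
  ext i j
  by_cases h : i = j <;>
    simp [Matrix.map_apply, Matrix.one_apply, h, d_natCast hd_add hd_mul,
      d_zero hd_add hd_mul]

variable {Δ : Matrix ι ι K} (hΔ : IsUnit Δ.det) (hΔd : Δ.map d = 1)

include hΔ hΔd

private lemma mapd_inv : (Δ⁻¹).map d = -(Δ⁻¹ * Δ⁻¹) := by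
  have h1 : (Δ⁻¹ * Δ).map d = 0 := by
    rw [Matrix.nonsing_inv_mul Δ hΔ, mapd_one hd_add hd_mul]
  rw [mapd_mul hd_add hd_mul, hΔd, mul_one] at h1
  have h2 : (Δ⁻¹).map d * Δ = -Δ⁻¹ := eq_neg_of_add_eq_zero_left h1
  calc (Δ⁻¹).map d = (Δ⁻¹).map d * (Δ * Δ⁻¹) := by
        rw [Matrix.mul_nonsing_inv Δ hΔ, mul_one]
    _ = ((Δ⁻¹).map d * Δ) * Δ⁻¹ := by rw [mul_assoc]
    _ = -(Δ⁻¹ * Δ⁻¹) := by rw [h2, neg_mul]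

private lemma keyL (A : Matrix ι ι K) (hA : A.map d = 0) (m : ℕ) :
    iterMat d (Δ⁻¹ * A) (m + 1) =
      Δ⁻¹ * (A - (((m + 1 : ℕ) : K)) • 1) * iterMat d (Δ⁻¹ * A) m := by
  induction m with
  | zero =>
      rw [iterMat_succ_s4]
      show (Δ⁻¹ * A).map d + (Δ⁻¹ * A) * (Δ⁻¹ * A)
        = Δ⁻¹ * (A - (((0 + 1 : ℕ) : K)) • 1) * (Δ⁻¹ * A)
      rw [mapd_mul hd_add hd_mul, hA, mul_zero, add_zero,
        mapd_inv hd_add hd_mul hΔ hΔd]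
      norm_num
      noncomm_ring
  | succ m ih =>
      rw [iterMat_succ_s4, ih, mapd_mul hd_add hd_mul]
      have hX : (iterMat d (Δ⁻¹ * A) m).map d =
          Δ⁻¹ * (A - (((m + 1 : ℕ) : K)) • 1) * iterMat d (Δ⁻¹ * A) m
            - iterMat d (Δ⁻¹ * A) m * (Δ⁻¹ * A) :=
        eq_sub_of_add_eq ((iterMat_succ_s4 d (Δ⁻¹ * A) m).symm.trans ih)
      have hAc : (A - (((m + 1 : ℕ) : K)) • (1 : Matrix ι ι K)).map d = 0 := by
        rw [mapd_sub hd_add hd_mul, hA, mapd_cast_smul_one hd_add hd_mul, sub_zero]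
      rw [mapd_mul hd_add hd_mul, hAc, mul_zero, add_zero,
        mapd_inv hd_add hd_mul hΔ hΔd, hX]
      have hcast : A - (((m + 1 + 1 : ℕ) : K)) • (1 : Matrix ι ι K)
          = (A - (((m + 1 : ℕ) : K)) • 1) - 1 := by
        push_cast
        rw [add_smul, one_smul, sub_add_eq_sub_sub]
      rw [hcast]
      set M := A - (((m + 1 : ℕ) : K)) • (1 : Matrix ι ι K)
      set X := iterMat d (Δ⁻¹ * A) m
      noncomm_ring

private lemma keyS (A : Matrix ι ι K) (hA : A.map d = 0) (j m : ℕ) :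
    iterMat d (Δ⁻¹ * A) (m + j + 1) =
      iterMat d (Δ⁻¹ * (A - (((j + 1 : ℕ) : K)) • 1)) m * iterMat d (Δ⁻¹ * A) j := by
  induction m with
  | zero =>
      have := keyL hd_add hd_mul hΔ hΔd A hA j
      simpa [iterMat] using this
  | succ m ih =>
      have e : m + 1 + j + 1 = (m + j + 1) + 1 := by omega
      rw [e, iterMat_succ_s4, ih, mapd_mul hd_add hd_mul, iterMat_succ_s4]
      have hY : (iterMat d (Δ⁻¹ * A) j).map d =
          Δ⁻¹ * (A - (((j + 1 : ℕ) : K)) • 1) * iterMat d (Δ⁻¹ * A) j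
            - iterMat d (Δ⁻¹ * A) j * (Δ⁻¹ * A) :=
        eq_sub_of_add_eq ((iterMat_succ_s4 d (Δ⁻¹ * A) j).symm.trans
          (keyL hd_add hd_mul hΔ hΔd A hA j))
      rw [hY]
      set X := iterMat d (Δ⁻¹ * (A - (((j + 1 : ℕ) : K)) • 1)) m
      set Y := iterMat d (Δ⁻¹ * A) j
      set Z := Δ⁻¹ * (A - (((j + 1 : ℕ) : K)) • 1)
      set W := Δ⁻¹ * A
      noncomm_ring

end Aux

/-- In characteristic `p`, with `C = (t·1-T)⁻¹ B` and `C̃ = (t·1-T)⁻¹ (B-1)`, one has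
`(C̃_p)^k · C = C_{kp+1}` for every `k ≥ 1`. -/
theorem okubo_shifted_pCurvature_power
    {K : Type*} [Field K] {p : ℕ} (hp : p.Prime) [CharP K p]
    (d : K → K) (hd_add : ∀ a b : K, d (a + b) = d a + d b)
    (hd_mul : ∀ a b : K, d (a * b) = a * d b + d a * b)
    {n : ℕ} (t : K) (ht : d t = 1)
    (ts : Fin n → K) (hts : ∀ i, d (ts i) = 0) (htne : ∀ i, t ≠ ts i)
    (B : Matrix (Fin n) (Fin n) K) (hB : ∀ a b, d (B a b) = 0) :
    ∀ k : ℕ, 1 ≤ k →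
      (iterMat d ((t • (1 : Matrix (Fin n) (Fin n) K) - Matrix.diagonal ts)⁻¹ *
          (B - 1)) (p - 1)) ^ k *
        ((t • (1 : Matrix (Fin n) (Fin n) K) - Matrix.diagonal ts)⁻¹ * B) =
      iterMat d ((t • (1 : Matrix (Fin n) (Fin n) K) - Matrix.diagonal ts)⁻¹ * B)
        (k * p) := by
  set Δ : Matrix (Fin n) (Fin n) K := t • 1 - Matrix.diagonal ts with hΔdef
  have hΔdiag : Δ = Matrix.diagonal (fun i => t - ts i) := by
    rw [hΔdef]
    ext i j
    by_cases h : i = j <;>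
      simp [Matrix.diagonal_apply, Matrix.one_apply, h]
  have hΔ : IsUnit Δ.det := by
    rw [hΔdiag, Matrix.det_diagonal]
    refine isUnit_iff_ne_zero.mpr (Finset.prod_ne_zero_iff.mpr fun i _ => ?_)
    exact sub_ne_zero.mpr (htne i)
  have hdt : ∀ i, d (t - ts i) = 1 := by
    intro i
    have hneg : d (-(ts i)) = 0 := by
      have h0 := hd_add (ts i) (-(ts i))
      rw [add_neg_cancel, d_zero hd_add hd_mul, hts i, zero_add] at h0
      exact h0.symm
    rw [sub_eq_add_neg, hd_add t (-(ts i)), hneg, add_zero, ht]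
  have hΔd : Δ.map d = 1 := by
    rw [hΔdiag]
    ext i j
    by_cases h : i = j <;>
      simp [Matrix.diagonal_apply, Matrix.one_apply, h, hdt,
        d_zero hd_add hd_mul]
  have hBc : B.map d = 0 := by ext a b; exact hB a b
  -- step lemma
  have hstep : ∀ j : ℕ, (((j + 1 : ℕ) : K)) = 1 →
      iterMat d (Δ⁻¹ * B) ((p - 1) + j + 1) =
        iterMat d (Δ⁻¹ * (B - 1)) (p - 1) * iterMat d (Δ⁻¹ * B) j := by
    intro j hj
    have := keyS hd_add hd_mul hΔ hΔd B hBc j (p - 1)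
    rwa [hj, one_smul] at this
  have hp1 : 1 ≤ p := hp.one_lt.le.trans' (by norm_num)
  intro k hk
  induction k with
  | zero => omega
  | succ k ih =>
      rcases Nat.eq_or_lt_of_le hk with h1 | h1
      · -- k + 1 = 1
        have hk0 : k = 0 := by omega
        subst hk0
        have h := hstep 0 (by norm_num)
        rw [show (p - 1) + 0 + 1 = 1 * p by omega] at h
        rw [pow_one, h]
        rfl
      · have hk1 : 1 ≤ k := by omega
        have ihk := ih hk1
        have hj : (((k * p + 1 : ℕ) : K)) = 1 := by
          push_cast
          rw [CharP.cast_eq_zero K p, mul_zero, zero_add]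
        have h := hstep (k * p) hj
        rw [show (p - 1) + k * p + 1 = (k + 1) * p by rw [add_mul, one_mul]; omega] at h
        rw [h, ← ihk, pow_succ', mul_assoc]
end

section
/- Let H be the nr×nr block matrix (r×r blocks of size n×n) with identity blocks 1_n on the diagonal, blocks −1_n on the superdiagonal (positions (i, i+1)), and zero blocks elsewhere; let T̂ be the nr×nr block diagonal matrix whose i-th diagonal block is t_i·1_n; and let G be the nr×nr block matrix that is zero outside its last (r-th) block row and whose (r, k) block equals ∑_{j=1}^{k} (t − t_j)^{-1} A_j for k = 1,...,r. Then H·(t·1 − T̂) is invertible and G = H·(t·1 − T̂) · D^0 · (H·(t·1 − T̂))^{-1}, where D^0 is the naive convolution matrix with parameter μ = 0. -/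
/-- The block matrix `H` with identity blocks on the diagonal, `-1` blocks on the
superdiagonal and zero blocks elsewhere. -/
def Hmat {K : Type*} [Field K] (n r : ℕ) :
    Matrix (Fin r × Fin n) (Fin r × Fin n) K :=
  fun p q =>
    if p.1 = q.1 ∧ p.2 = q.2 then 1
    else if q.1.val = p.1.val + 1 ∧ p.2 = q.2 then -1 else 0

/-- The matrix `G`: zero outside the last block row, with `(r,k)`-block
`∑_{j=1}^{k} (t - t_j)⁻¹ A_j`. -/
def Gmat {K : Type*} [Field K] {n r : ℕ} (t : K) (ts : Fin r → K)
    (A : Fin r → Matrix (Fin n) (Fin n) K) :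
    Matrix (Fin r × Fin n) (Fin r × Fin n) K :=
  fun p q =>
    if p.1.val = r - 1 then
      ∑ j ∈ Finset.univ.filter (fun j : Fin r => j ≤ q.1), (t - ts j)⁻¹ * A j p.2 q.2
    else 0

/-!
Put `S = t·1 - T̂`, invertible because `t ≠ tᵢ`. The naive convolution factors as `D⁰ = S⁻¹ E`,
where every block row of `E` is `(A₁, …, A_r)`. The inverse of `H` is the block upper
triangular matrix of identity blocks, so `H E` keeps only the last block row of `E`. Hence
`(H S) D⁰ (H S)⁻¹ = (H E) S⁻¹ H⁻¹`: right multiplication by `S⁻¹` scales the `k`-th block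
by `(t - t_k)⁻¹`, and right multiplication by `H⁻¹` replaces the blocks of a row by their
partial sums, which produces `G`.
-/

section BlockMatrices

open Matrix

variable {α : Type*} {n r : ℕ}

theorem Fin.sum_ite_val_eq [AddCommMonoid α] (f : Fin r → α) (k : ℕ) :
    ∑ i : Fin r, (if i.val = k then f i else 0) = if h : k < r then f ⟨k, h⟩ else 0 := by
  split_ifs with h
  · simp_rw [← Fin.ext_iff (b := ⟨k, h⟩)]
    simp
  · exact Finset.sum_eq_zero fun i _ => if_neg (by omega)

def HmatInv [Zero α] [One α] (n r : ℕ) : Matrix (Fin r × Fin n) (Fin r × Fin n) α :=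
  fun p q => if p.1 ≤ q.1 ∧ p.2 = q.2 then 1 else 0

def lastBlockRow [Zero α] (B : Fin r → Matrix (Fin n) (Fin n) α) :
    Matrix (Fin r × Fin n) (Fin r × Fin n) α :=
  fun p q => if p.1.val = r - 1 then B q.1 p.2 q.2 else 0

def repeatedBlockRow (B : Fin r → Matrix (Fin n) (Fin n) α) :
    Matrix (Fin r × Fin n) (Fin r × Fin n) α :=
  of fun p q => B q.1 p.2 q.2

section Semiring
variable [Semiring α]

theorem lastBlockRow_mul_HmatInv (B : Fin r → Matrix (Fin n) (Fin n) α) :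
    lastBlockRow B * HmatInv n r = lastBlockRow fun k => ∑ j with j ≤ k, B j := by
  ext p q
  by_cases hp : p.1.val = r - 1 <;>
    simp [lastBlockRow, HmatInv, hp, mul_apply, Fintype.sum_prod_type, Matrix.sum_apply,
      Finset.sum_filter, ite_and, Finset.sum_ite_irrel]

theorem HmatInv_mul_lastBlockRow (B : Fin r → Matrix (Fin n) (Fin n) α) :
    HmatInv n r * lastBlockRow B = repeatedBlockRow B := by
  ext p q
  have hr : r - 1 < r := Nat.sub_one_lt_of_lt p.1.isLt
  have hle : p.1 ≤ ⟨r - 1, hr⟩ := Fin.le_def.2 (Nat.le_sub_one_of_lt p.1.isLt)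
  simp [lastBlockRow, HmatInv, repeatedBlockRow, mul_apply, Fintype.sum_prod_type,
    Fin.sum_ite_val_eq, hr, hle]

end Semiring

theorem lastBlockRow_mul_diagonal [CommSemiring α] (B : Fin r → Matrix (Fin n) (Fin n) α)
    (c : Fin r → α) :
    lastBlockRow B * diagonal (fun q : Fin r × Fin n => c q.1) =
      lastBlockRow fun k => c k • B k := by
  ext p q
  simp [lastBlockRow, mul_diagonal, mul_comm]

section Field
variable {K : Type*} [Field K]

theorem Hmat_mul_apply (X : Matrix (Fin r × Fin n) (Fin r × Fin n) K) (p q : Fin r × Fin n) :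
    (Hmat n r * X : Matrix (Fin r × Fin n) (Fin r × Fin n) K) p q =
      X p q - if h : p.1.val + 1 < r then X (⟨p.1.val + 1, h⟩, p.2) q else 0 := by
  have hH : Hmat n r = (1 : Matrix (Fin r × Fin n) (Fin r × Fin n) K) -
      of fun p q => if p.2 = q.2 ∧ q.1.val = p.1.val + 1 then 1 else 0 := by
    ext p q
    simp only [Hmat, Matrix.sub_apply, one_apply, of_apply, Prod.ext_iff, Fin.ext_iff]
    split_ifs <;> simp_all
  rw [hH, Matrix.sub_mul, Matrix.one_mul, Matrix.sub_apply, mul_apply, Fintype.sum_prod_type]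
  simp only [of_apply, ite_and, ite_mul, one_mul, zero_mul, Finset.sum_ite_eq,
    Finset.mem_univ, if_true, Fin.sum_ite_val_eq]

theorem Hmat_mul_HmatInv :
    Hmat n r * HmatInv n r = (1 : Matrix (Fin r × Fin n) (Fin r × Fin n) K) := by
  ext p q
  rw [Hmat_mul_apply]
  simp only [HmatInv, one_apply, Prod.ext_iff, Fin.le_def, Fin.ext_iff]
  split_ifs <;> simp_all <;> omega

theorem HmatInv_mul_Hmat :
    HmatInv n r * Hmat n r = (1 : Matrix (Fin r × Fin n) (Fin r × Fin n) K) :=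
  mul_eq_one_comm.mp Hmat_mul_HmatInv

theorem Hmat_mul_repeatedBlockRow (B : Fin r → Matrix (Fin n) (Fin n) K) :
    Hmat n r * repeatedBlockRow B = lastBlockRow B := by
  rw [← HmatInv_mul_lastBlockRow, ← Matrix.mul_assoc, Hmat_mul_HmatInv, Matrix.one_mul]

theorem sum_smul_convBlock_zero (A : Fin r → Matrix (Fin n) (Fin n) K) (c : Fin r → K) :
    ∑ k, c k • convBlock A 0 k =
      diagonal (fun q : Fin r × Fin n => c q.1) * repeatedBlockRow A := by
  ext p q
  simp [convBlock, repeatedBlockRow, diagonal_mul, Matrix.sum_apply]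

theorem Gmat_eq_lastBlockRow_mul_HmatInv (t : K) (ts : Fin r → K)
    (A : Fin r → Matrix (Fin n) (Fin n) K) :
    Gmat t ts A = lastBlockRow (fun k => (t - ts k)⁻¹ • A k) * HmatInv n r := by
  rw [lastBlockRow_mul_HmatInv]
  ext p q
  simp [Gmat, lastBlockRow, Matrix.sum_apply]

end Field

end BlockMatrices

theorem naive_convolution_conjugate_to_G_general
    {K : Type*} [Field K] {n r : ℕ}
    (t : K) (ts : Fin r → K)
    (htne : ∀ i, t ≠ ts i)
    (A : Fin r → Matrix (Fin n) (Fin n) K) :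
    IsUnit (Hmat n r * (t • (1 : Matrix (Fin r × Fin n) (Fin r × Fin n) K) -
        Matrix.diagonal (fun q : Fin r × Fin n => ts q.1))) ∧
      Gmat t ts A =
        (Hmat n r * (t • (1 : Matrix (Fin r × Fin n) (Fin r × Fin n) K) -
            Matrix.diagonal (fun q : Fin r × Fin n => ts q.1))) *
          (∑ k, (t - ts k)⁻¹ • convBlock A (0 : K) k) *
          (Hmat n r * (t • (1 : Matrix (Fin r × Fin n) (Fin r × Fin n) K) -
            Matrix.diagonal (fun q : Fin r × Fin n => ts q.1)))⁻¹ := by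
  set c : Fin r → K := fun k => (t - ts k)⁻¹
  set S := Matrix.diagonal fun q : Fin r × Fin n => t - ts q.1
  set C := Matrix.diagonal fun q : Fin r × Fin n => c q.1
  have hS : t • (1 : Matrix (Fin r × Fin n) (Fin r × Fin n) K) -
      Matrix.diagonal (fun q => ts q.1) = S := by
    rw [Matrix.smul_one_eq_diagonal, Matrix.diagonal_sub]
  have hSC : S * C = 1 := by
    rw [Matrix.diagonal_mul_diagonal, ← Matrix.diagonal_one]
    exact congrArg Matrix.diagonal
      (funext fun q => mul_inv_cancel₀ (sub_ne_zero.2 (htne q.1)))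
  have hleft : C * HmatInv n r * (Hmat n r * S) = 1 := by
    rw [Matrix.mul_assoc, ← Matrix.mul_assoc (HmatInv n r), HmatInv_mul_Hmat, Matrix.one_mul,
      mul_eq_one_comm.mp hSC]
  rw [hS, Matrix.inv_eq_left_inv hleft, sum_smul_convBlock_zero,
    Gmat_eq_lastBlockRow_mul_HmatInv]
  refine ⟨.of_mul_eq_one_right _ hleft, ?_⟩
  calc lastBlockRow (fun k => c k • A k) * HmatInv n r
      = Hmat n r * repeatedBlockRow A * C * HmatInv n r := by
        rw [Hmat_mul_repeatedBlockRow, lastBlockRow_mul_diagonal]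
    _ = Hmat n r * (S * C) * repeatedBlockRow A * (C * HmatInv n r) := by
        rw [hSC, Matrix.mul_one, Matrix.mul_assoc _ C]
    _ = Hmat n r * S * (C * repeatedBlockRow A) * (C * HmatInv n r) := by
        simp only [Matrix.mul_assoc]

/-- `H·(t·1 - T̂)` is invertible and conjugates the naive convolution `D^0` into `G`:
`G = H·(t·1 - T̂) · D^0 · (H·(t·1 - T̂))⁻¹`. -/
theorem naive_convolution_conjugate_to_G
    {K : Type*} [Field K] {n r : ℕ}
    (t : K) (ts : Fin r → K)
    (hdist : Function.Injective ts) (htne : ∀ i, t ≠ ts i)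
    (A : Fin r → Matrix (Fin n) (Fin n) K) :
    IsUnit (Hmat n r * (t • (1 : Matrix (Fin r × Fin n) (Fin r × Fin n) K) -
        Matrix.diagonal (fun q : Fin r × Fin n => ts q.1))) ∧
      Gmat t ts A =
        (Hmat n r * (t • (1 : Matrix (Fin r × Fin n) (Fin r × Fin n) K) -
            Matrix.diagonal (fun q : Fin r × Fin n => ts q.1))) *
          (∑ k, (t - ts k)⁻¹ • convBlock A (0 : K) k) *
          (Hmat n r * (t • (1 : Matrix (Fin r × Fin n) (Fin r × Fin n) K) -
            Matrix.diagonal (fun q : Fin r × Fin n => ts q.1)))⁻¹ :=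
  naive_convolution_conjugate_to_G_general t ts htne A
end

section
/- Let G be the nr×nr block matrix (r×r blocks of size n×n) that is zero outside its last (r-th) block row and whose (r, k) block equals ∑_{j=1}^{k} (t − t_j)^{-1} A_j, and let C := ∑_{i=1}^r (t − t_i)^{-1} A_i. Then for every m ≥ 1, the m-th iterated matrix G_m of the system Y' = GY is zero outside its last block row, and its (r, r) block equals the m-th iterated matrix C_m of the system Y' = CY. -/
open Matrix

section IterMat

variable {K : Type*} [Field K] {ι κ : Type*} [Fintype ι] [DecidableEq ι]
  [Fintype κ] [DecidableEq κ] {d : K → K} {C : Matrix ι ι K}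

theorem iterMat_apply_eq_zero_of_row_eq_zero (hd0 : d 0 = 0) {p : ι} (hC : ∀ q, C p q = 0)
    (m : ℕ) (q : ι) : iterMat d C m p q = 0 := by
  induction m generalizing q with
  | zero => exact hC q
  | succ m ih => simp [iterMat, mul_apply, ih, hd0]

theorem iterMat_submatrix_of_rows_eq_zero {e : κ → ι} (he : Function.Injective e)
    (hC : ∀ p ∉ Set.range e, ∀ q, C p q = 0) (m : ℕ) :
    (iterMat d C m).submatrix e e = iterMat d (C.submatrix e e) m := by
  induction m with
  | zero => rfl
  | succ m ih =>
    ext a b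
    have hmul : (iterMat d C m * C) (e a) (e b) =
        ∑ c, iterMat d C m (e a) (e c) * C (e c) (e b) := by
      rw [mul_apply]
      exact (Fintype.sum_of_injective e he _ (fun s => iterMat d C m (e a) s * C s (e b))
        (fun s hs => by rw [hC s hs, mul_zero]) (fun _ => rfl)).symm
    rw [iterMat, iterMat, ← ih]
    simp only [submatrix_apply, Matrix.add_apply, map_apply, hmul, mul_apply]

end IterMat

section Gmat

variable {K : Type*} [Field K] {n r : ℕ} (t : K) (ts : Fin r → K)
  (A : Fin r → Matrix (Fin n) (Fin n) K)

theorem Gmat_apply_of_ne_last {p : Fin r × Fin n} (hp : p.1.val ≠ r - 1) (q : Fin r × Fin n) :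
    Gmat t ts A p q = 0 := by
  simp [Gmat, hp]

theorem Gmat_apply_of_not_mem_range_prodMk {k : Fin r} (hk : k.val = r - 1) :
    ∀ p ∉ Set.range (Prod.mk (β := Fin n) k), ∀ q, Gmat t ts A p q = 0 := by
  rintro ⟨l, c⟩ hp q
  refine Gmat_apply_of_ne_last t ts A (fun hl => hp ⟨c, ?_⟩) q
  rw [Fin.ext (hk.trans hl.symm)]

theorem Gmat_submatrix_prodMk {k : Fin r} (hk : k.val = r - 1) :
    (Gmat t ts A).submatrix (Prod.mk k) (Prod.mk k) = ∑ i, (t - ts i)⁻¹ • A i := by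
  ext a b
  have hle : ∀ j : Fin r, j ≤ k := fun j => Fin.le_def.mpr (hk ▸ Nat.le_sub_one_of_lt j.isLt)
  simp [Gmat, Matrix.sum_apply, hk, hle]

end Gmat

/-- For every `m ≥ 1`, the `m`-th iterated matrix `G_m` of `Y' = G Y` is zero outside
its last block row, and its `(r,r)`-block equals the `m`-th iterated matrix `C_m` of the
Fuchsian system `C = ∑ (t - tᵢ)⁻¹ Aᵢ`. -/
theorem iterated_matrix_G_last_block_row
    {K : Type*} [Field K]
    (d : K → K) (hd_add : ∀ a b : K, d (a + b) = d a + d b)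
    {n r : ℕ} (hr : 0 < r) (t : K)
    (ts : Fin r → K)
    (A : Fin r → Matrix (Fin n) (Fin n) K) :
    ∀ m : ℕ, 1 ≤ m →
      (∀ pq qq : Fin r × Fin n, pq.1.val ≠ r - 1 →
        iterMat d (Gmat t ts A) (m - 1) pq qq = 0) ∧
      (∀ a b : Fin n,
        iterMat d (Gmat t ts A) (m - 1) (⟨r - 1, by omega⟩, a) (⟨r - 1, by omega⟩, b) =
          iterMat d (∑ i, (t - ts i)⁻¹ • A i) (m - 1) a b) := by
  intro m _
  have hd0 : d 0 = 0 := by simpa using hd_add 0 0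
  refine ⟨fun p q hp => iterMat_apply_eq_zero_of_row_eq_zero hd0
    (Gmat_apply_of_ne_last t ts A hp) _ q, fun a b => ?_⟩
  have hblock := congr_fun₂ (iterMat_submatrix_of_rows_eq_zero (d := d)
    (Prod.mk_right_injective _)
    (Gmat_apply_of_not_mem_range_prodMk t ts A (k := ⟨r - 1, by omega⟩) rfl) (m - 1)) a b
  rwa [Gmat_submatrix_prodMk t ts A rfl] at hblock
end

section
/- For each k = 1,...,r, the subspace K_k := {(v_1,...,v_r) ∈ V^r : v_j = 0 for all j ≠ k, and (M_k − 1)v_k = 0} is invariant under N_j for every j = 1,...,r, i.e. N_j(K_k) ⊆ K_k. -/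
/-- For each `k`, the subspace
`K_k = {(v_1,…,v_r) : v_j = 0 for j ≠ k and (M_k - 1)v_k = 0}` of `V^r` is invariant
under every `N_j`. Here `N_k` sends `(v_1,…,v_r)` to the tuple agreeing with it in every
coordinate except the `k`-th, whose `k`-th coordinate is
`∑_{j<k} (M_j - 1)v_j + λ·M_k v_k + ∑_{j>k} λ·(M_j - 1)v_j`. -/
theorem convolution_Kk_invariant
    {K : Type*} [Field K] {V : Type*} [AddCommGroup V] [Module K V]
    [FiniteDimensional K V] {r : ℕ} (hr : 1 ≤ r)
    (M : Fin r → Module.End K V) (hM : ∀ k, IsUnit (M k))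
    (lam : K) (hlam : lam ≠ 0)
    (N : Fin r → Module.End K (Fin r → V))
    (hN : ∀ (k : Fin r) (v : Fin r → V) (j : Fin r),
      N k v j =
        if j = k then
          (∑ i ∈ Finset.univ.filter (fun i : Fin r => i < k), (M i (v i) - v i)) +
            lam • M k (v k) +
            ∑ i ∈ Finset.univ.filter (fun i : Fin r => k < i), lam • (M i (v i) - v i)
        else v j) :
    ∀ (j k : Fin r) (v : Fin r → V),
      (∀ i, i ≠ k → v i = 0) → M k (v k) - v k = 0 →
        (∀ i, i ≠ k → N j v i = 0) ∧ M k (N j v k) - N j v k = 0 := by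
  intro j k v hv hk
  -- each term of the sums is zero
  have hterm : ∀ i : Fin r, M i (v i) - v i = 0 := by
    intro i
    by_cases h : i = k
    · subst h; exact hk
    · rw [hv i h, map_zero, sub_zero]
  have hsum1 : ∀ m : Fin r,
      (∑ i ∈ Finset.univ.filter (fun i : Fin r => i < m), (M i (v i) - v i)) = 0 :=
    fun m => Finset.sum_eq_zero (fun i _ => hterm i)
  have hsum2 : ∀ m : Fin r,
      (∑ i ∈ Finset.univ.filter (fun i : Fin r => m < i), lam • (M i (v i) - v i)) = 0 :=
    fun m => Finset.sum_eq_zero (fun i _ => by rw [hterm i, smul_zero])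
  constructor
  · intro i hi
    rw [hN]
    by_cases h : i = j
    · subst h
      have hij : i ≠ k := hi
      simp only [if_pos rfl, hsum1, hsum2, hv i hij, map_zero, smul_zero, add_zero, zero_add, ite_self]
    · rw [if_neg h, hv i hi]
  · by_cases h : k = j
    · subst h
      rw [hN, if_pos rfl, hsum1, hsum2, add_zero, zero_add]
      have hMk : M k (v k) = v k := by rwa [sub_eq_zero] at hk
      rw [hMk, map_smul, hMk, sub_self]
    · rw [hN, if_neg h, hk]
end

section
/- The intersection ∩_{k=1}^r ker(N_k − 1) equals ker(N_r·N_{r−1}·⋯·N_1 − 1), the kernel of (the composite N_r∘⋯∘N_1) minus the identity. -/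
/-- The intersection `∩_{k=1}^r ker(N_k - 1)` equals `ker(N_r · N_{r-1} ⋯ N_1 - 1)`.
Here `N_k` sends `(v_1,…,v_r)` to the tuple agreeing with it in every coordinate except
the `k`-th, whose `k`-th coordinate is
`∑_{j<k} (M_j - 1)v_j + λ·M_k v_k + ∑_{j>k} λ·(M_j - 1)v_j`. -/
theorem convolution_fixed_space_eq
    {K : Type*} [Field K] {V : Type*} [AddCommGroup V] [Module K V]
    [FiniteDimensional K V] {r : ℕ} (hr : 1 ≤ r)
    (M : Fin r → Module.End K V) (hM : ∀ k, IsUnit (M k))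
    (lam : K) (hlam : lam ≠ 0)
    (N : Fin r → Module.End K (Fin r → V))
    (hN : ∀ (k : Fin r) (v : Fin r → V) (j : Fin r),
      N k v j =
        if j = k then
          (∑ i ∈ Finset.univ.filter (fun i : Fin r => i < k), (M i (v i) - v i)) +
            lam • M k (v k) +
            ∑ i ∈ Finset.univ.filter (fun i : Fin r => k < i), lam • (M i (v i) - v i)
        else v j) :
    (⨅ k : Fin r, LinearMap.ker (N k - 1)) =
      LinearMap.ker (((List.finRange r).reverse.map N).prod - 1) := by
  classical
  set Q : ℕ → Module.End K (Fin r → V) :=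
    fun k => ((((List.finRange r).take k).map N).reverse).prod with hQ
  -- the full product equals Q r
  have hfull : ((List.finRange r).reverse.map N).prod = Q r := by
    simp [hQ, List.take_of_length_le, List.map_reverse]
  -- step lemma
  have hstep : ∀ (k : ℕ) (hk : k < r) (v : Fin r → V),
      Q (k + 1) v = N ⟨k, hk⟩ (Q k v) := by
    intro k hk v
    have hk' : k < (List.finRange r).length := by simpa using hk
    have htake : (List.finRange r).take (k + 1)
        = (List.finRange r).take k ++ [⟨k, hk⟩] := by
      rw [List.take_succ]
      congr 1
      rw [List.getElem?_eq_getElem hk']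
      simp
    simp only [hQ]
    rw [htake, List.map_append, List.reverse_append]
    simp [Module.End.mul_apply]
  -- saturation
  have hsat : ∀ k : ℕ, r ≤ k → Q k = Q r := by
    intro k hk
    have h1 : (List.finRange r).take k = List.finRange r :=
      List.take_of_length_le (by simpa using hk)
    have h2 : (List.finRange r).take r = List.finRange r :=
      List.take_of_length_le (by simp)
    simp only [hQ]
    rw [h1, h2]
  -- coordinates ≥ k are unchanged by Q k
  have hA : ∀ (k : ℕ) (v : Fin r → V) (j : Fin r), k ≤ j.val → Q k v j = v j := by
    intro k
    induction k with
    | zero => intro v j _; simp [hQ]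
    | succ k ih =>
        intro v j hj
        have hjlt := j.isLt
        have hkr : k < r := by omega
        rw [hstep k hkr v, hN]
        have hne : j ≠ ⟨k, hkr⟩ := by
          intro h
          have : j.val = k := by rw [h]
          omega
        rw [if_neg hne]
        exact ih v j (Nat.le_of_succ_le hj)
  -- coordinate j stabilizes after step j+1
  have hB : ∀ (v : Fin r → V) (j : Fin r) (k : ℕ), j.val < k →
      Q k v j = Q (j.val + 1) v j := by
    intro v j k
    induction k with
    | zero => intro h; omega
    | succ k ih =>
        intro hj
        rcases Nat.lt_or_ge j.val k with hlt | hge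
        · rcases Nat.lt_or_ge k r with hkr | hkr
          · rw [hstep k hkr v, hN]
            have hne : j ≠ ⟨k, hkr⟩ := by
              intro h
              have : j.val = k := by rw [h]
              omega
            rw [if_neg hne]
            exact ih hlt
          · rw [show Q (k+1) = Q r from hsat _ (le_trans hkr (Nat.le_succ k)),
              ← hsat k hkr]
            exact ih hlt
        · have : j.val = k := by omega
          rw [this]
  -- main argument
  ext v
  simp only [Submodule.mem_iInf, LinearMap.mem_ker, LinearMap.sub_apply,
    Module.End.one_apply, sub_eq_zero, hfull]
  constructor
  · intro h
    have hall : ∀ k : ℕ, k ≤ r → Q k v = v := by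
      intro k
      induction k with
      | zero => intro _; simp [hQ]
      | succ k ih =>
          intro hk
          have hkr : k < r := hk
          rw [hstep k hkr v, ih (Nat.le_of_succ_le hk)]
          exact h ⟨k, hkr⟩
    exact hall r le_rfl
  · intro h k
    have hall : ∀ m : ℕ, m ≤ r → Q m v = v := by
      intro m
      induction m with
      | zero => intro _; simp [hQ]
      | succ m ih =>
          intro hm
          have hmr : m < r := hm
          have hQm : Q m v = v := ih (Nat.le_of_succ_le hm)
          have hNm : N ⟨m, hmr⟩ v = v := by
            funext j
            by_cases hj : j = ⟨m, hmr⟩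
            · subst hj
              have h1 : Q (m + 1) v ⟨m, hmr⟩ = v ⟨m, hmr⟩ := by
                rcases Nat.lt_or_ge (m + 1) r with hlt | hge
                · rw [show ((⟨m, hmr⟩ : Fin r) : ℕ) + 1 = m + 1 from rfl] at *
                  have := hB v ⟨m, hmr⟩ r (by simpa using hmr)
                  simp only [show ((⟨m, hmr⟩ : Fin r) : ℕ) = m from rfl] at this
                  rw [← this, h]
                · have : m + 1 = r := by omega
                  rw [this, h]
              rw [← h1, hstep m hmr v, hQm]
            · rw [hN, if_neg hj]
          rw [hstep m hmr v, hQm, hNm]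
    have h1 : Q (k.val + 1) v = v := hall _ k.isLt
    have h2 : N k (Q k.val v) = Q (k.val + 1) v := by
      rw [hstep k.val k.isLt v]
    rw [hall k.val (le_of_lt k.isLt)] at h2
    calc N k v = Q (k.val + 1) v := h2
    _ = v := h1
end

section
/- No complex root of the polynomial f(X) = X^4 − 2X^3 − 2X^2 − 2X + 1 is a root of unity; that is, if z ∈ ℂ satisfies f(z) = 0, then z^n ≠ 1 for every integer n ≥ 1. -/
/-!
A root of `f` that is a root of unity lies on the unit circle, where `f` being palindromic turns
`f(x) = 0` into `w² - 2w - 4 = 0` for `w = x + x̄ = 2 Re x`; as `|Re x| ≤ 1`, this forces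
`Re x = ψ = (1 - √5)/2`. Every Galois conjugate of such a `z` is again a root of `f` and of unity,
so it has the same modulus and real part, and is `z` or `z̄`. Hence the minimal polynomial of `z`
over `ℚ` has roots exactly `z, z̄`, so `2ψ = z + z̄` is rational, which is absurd.
-/

open Polynomial ComplexConjugate
open scoped goldenRatio

theorem Complex.eq_or_eq_conj_of_norm_eq_of_re_eq {x y : ℂ} (hnorm : ‖x‖ = ‖y‖)
    (hre : x.re = y.re) : x = y ∨ x = conj y := by
  have him : x.im ^ 2 = y.im ^ 2 := by
    have := congrArg (· ^ 2) hnorm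
    simp only [Complex.sq_norm, Complex.normSq_apply, hre] at this
    linear_combination this
  rcases sq_eq_sq_iff_eq_or_eq_neg.1 him with h | h
  · exact .inl (Complex.ext hre h)
  · exact .inr (Complex.ext hre (by simpa using h))

theorem Real.eq_goldenConj_of_sq_eq_add_one {x : ℝ} (h : x ^ 2 = x + 1) (hx : x < φ) :
    x = ψ := by
  have hfac : (x - φ) * (x - ψ) = 0 := by
    linear_combination h - x * goldenRatio_add_goldenConj + goldenRatio_mul_goldenConj
  rcases mul_eq_zero.1 hfac with h | h
  · linarith
  · linarith

theorem re_eq_goldenConj_of_quartic_eq_zero {x : ℂ}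
    (hf : x ^ 4 - 2 * x ^ 3 - 2 * x ^ 2 - 2 * x + 1 = 0) (hx : ‖x‖ = 1) : x.re = ψ := by
  have hunit : x * conj x = 1 := by
    rw [Complex.mul_conj, Complex.normSq_eq_norm_sq, hx]; norm_num
  have hquad : x ^ 2 * ((x + conj x) ^ 2 - 2 * (x + conj x) - 4) = 0 := by
    linear_combination hf + (2 * x ^ 2 - 2 * x + 1 + x * conj x) * hunit
  have hre : ((2 * x.re) ^ 2 - 2 * (2 * x.re) - 4 : ℝ) = 0 := by
    rw [Complex.add_conj] at hquad
    exact_mod_cast (mul_eq_zero.1 hquad).resolve_left (pow_ne_zero 2 (by rintro rfl; simp at hx))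
  refine Real.eq_goldenConj_of_sq_eq_add_one (by linear_combination hre / 4) ?_
  calc x.re ≤ ‖x‖ := Complex.re_le_norm x
    _ < φ := hx ▸ Real.one_lt_goldenRatio

theorem Polynomial.aeval_eq_zero_of_mem_aroots_minpoly {K L : Type*} [Field K] [CommRing L]
    [IsDomain L] [Algebra K L] {z x : L} (hx : x ∈ (minpoly K z).aroots L) {p : K[X]}
    (hp : aeval z p = 0) : aeval x p = 0 :=
  aeval_eq_zero_of_dvd_aeval_eq_zero (minpoly.dvd K z hp) (mem_aroots.1 hx).2

theorem Complex.im_ne_zero_of_re_eq_goldenConj {x : ℂ} (hx : ‖x‖ = 1) (hre : x.re = ψ) :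
    x.im ≠ 0 := by
  intro him
  have h := Complex.abs_re_eq_norm.2 him
  rw [hre, hx, abs_of_neg Real.goldenConj_neg] at h
  linarith [Real.neg_one_lt_goldenConj]

theorem exists_ratCast_eq_two_mul_re_of_aroots_minpoly {z : ℂ} (hz : IsIntegral ℚ z)
    (him : z.im ≠ 0) (hroots : ∀ x ∈ (minpoly ℚ z).aroots ℂ, x = z ∨ x = conj z) :
    ∃ q : ℚ, (q : ℝ) = 2 * z.re := by
  have hne : z ≠ conj z := fun h ↦ him (Complex.conj_eq_iff_im.1 h.symm)
  have hnodup : ((minpoly ℚ z).aroots ℂ).Nodup :=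
    nodup_roots (minpoly.irreducible hz).separable.map
  have hz_mem : z ∈ (minpoly ℚ z).aroots ℂ :=
    mem_aroots.2 ⟨minpoly.ne_zero hz, minpoly.aeval ℚ z⟩
  have hconj_mem : conj z ∈ (minpoly ℚ z).aroots ℂ :=
    mem_aroots.2 ⟨minpoly.ne_zero hz,
      minpoly.aeval_algHom ℚ (Complex.conjAe.toAlgHom.restrictScalars ℚ) z⟩
  have hroots_eq : (minpoly ℚ z).aroots ℂ = {z, conj z} := by
    refine (Multiset.Nodup.ext hnodup (by simp [hne])).2 fun x ↦ ⟨fun hx ↦ ?_, fun hx ↦ ?_⟩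
    · rcases hroots x hx with rfl | rfl <;> simp
    · rcases Multiset.mem_cons.1 hx with rfl | hx
      · exact hz_mem
      · exact (Multiset.mem_singleton.1 hx) ▸ hconj_mem
  have hsum := (IsAlgClosed.splits ((minpoly ℚ z).map (algebraMap ℚ ℂ))
    ).nextCoeff_eq_neg_sum_roots_of_monic ((minpoly.monic hz).map _)
  rw [nextCoeff_map (algebraMap ℚ ℂ).injective, ← aroots_def, hroots_eq] at hsum
  refine ⟨-(minpoly ℚ z).nextCoeff, Complex.ofReal_injective ?_⟩
  simp only [Multiset.insert_eq_cons, Multiset.sum_cons, Multiset.sum_singleton,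
    Complex.add_conj, eq_ratCast] at hsum
  push_cast at hsum ⊢
  linear_combination -hsum

/-- No complex root of `f(X) = X^4 - 2X^3 - 2X^2 - 2X + 1` is a root of unity. -/
theorem quartic_roots_not_roots_of_unity :
    ∀ z : ℂ, z ^ 4 - 2 * z ^ 3 - 2 * z ^ 2 - 2 * z + 1 = 0 →
      ∀ n : ℕ, 1 ≤ n → z ^ n ≠ 1 := by
  intro z hz n hn hzn
  have hn0 : n ≠ 0 := by omega
  have hz_norm : ‖z‖ = 1 := Complex.norm_eq_one_of_pow_eq_one hzn hn0
  have hz_re : z.re = ψ := re_eq_goldenConj_of_quartic_eq_zero hz hz_norm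
  have hz_int : IsIntegral ℚ z := .of_pow hn (hzn ▸ isIntegral_one)
  have hroots : ∀ x ∈ (minpoly ℚ z).aroots ℂ, x = z ∨ x = conj z := by
    intro x hx
    have hxn : x ^ n = 1 := by
      have h := aeval_eq_zero_of_mem_aroots_minpoly hx (p := X ^ n - 1) (by simp [hzn])
      simpa only [map_sub, map_pow, aeval_X, map_one, sub_eq_zero] using h
    have hxf : x ^ 4 - 2 * x ^ 3 - 2 * x ^ 2 - 2 * x + 1 = 0 := by
      have h := aeval_eq_zero_of_mem_aroots_minpoly hx
        (p := X ^ 4 - 2 * X ^ 3 - 2 * X ^ 2 - 2 * X + 1) (by simpa only [map_add, map_sub, map_mul, map_pow, aeval_X, map_ofNat, map_one])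
      simpa only [map_add, map_sub, map_mul, map_pow, aeval_X, map_ofNat, map_one] using h
    have hx_norm : ‖x‖ = 1 := Complex.norm_eq_one_of_pow_eq_one hxn hn0
    exact Complex.eq_or_eq_conj_of_norm_eq_of_re_eq (hx_norm.trans hz_norm.symm)
      ((re_eq_goldenConj_of_quartic_eq_zero hxf hx_norm).trans hz_re.symm)
  obtain ⟨q, hq⟩ := exists_ratCast_eq_two_mul_re_of_aroots_minpoly hz_int
    (Complex.im_ne_zero_of_re_eq_goldenConj hz_norm hz_re) hroots
  exact Real.goldenConj_irrational ⟨q / 2, by push_cast; linarith⟩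
end

section
/- The matrix B̃ has infinite order in GL_2(ℂ): for every integer n ≥ 1, B̃^n is not the identity matrix. -/
open Complex

/-- Integer coordinates of the Chebyshev-like sequence `u n = p n + q n * T`
in `ℤ[T]/(T² - 2T - 4)`, with `u 0 = 0`, `u 1 = 1`, `u (n+2) = T * u (n+1) - u n`. -/
def BtildePQ : ℕ → ℤ × ℤ
  | 0 => (0, 0)
  | 1 => (1, 0)
  | n + 2 => (4 * (BtildePQ (n+1)).2 - (BtildePQ n).1,
              (BtildePQ (n+1)).1 + 2 * (BtildePQ (n+1)).2 - (BtildePQ n).2)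

/-- The real "Galois conjugate" sequence, evaluating at `T = 1 + √5`. -/
noncomputable def BtildeW (n : ℕ) : ℝ :=
  ((BtildePQ n).1 : ℝ) + ((BtildePQ n).2 : ℝ) * (1 + Real.sqrt 5)

lemma BtildeW_grow : ∀ n : ℕ, 0 ≤ BtildeW n ∧ BtildeW n ≤ BtildeW (n+1) ∧ 1 ≤ BtildeW (n+1) := by
  have hs : Real.sqrt 5 ^ 2 = 5 := Real.sq_sqrt (by norm_num)
  have hs2 : 2 ≤ Real.sqrt 5 := by nlinarith [Real.sqrt_nonneg 5]
  intro n
  induction n with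
  | zero => norm_num [BtildeW, BtildePQ]
  | succ k ih =>
    obtain ⟨h0, h1, h2⟩ := ih
    have hrec : BtildeW (k+2) = (1 + Real.sqrt 5) * BtildeW (k+1) - BtildeW k := by
      show BtildeW (k+1+1) = _
      simp only [BtildeW, BtildePQ]
      push_cast
      linear_combination (-((BtildePQ (k+1)).2 : ℝ)) * hs
    refine ⟨by linarith, ?_, ?_⟩ <;> nlinarith [hrec]

/-- Key matrix lemma: a 2×2 complex matrix with determinant 1 whose trace `T`
satisfies `T² = 2T + 4` has infinite order. -/
lemma Btilde_aux (a b c d : ℂ) (hdet : a * d - b * c = 1)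
    (hT : (a + d) ^ 2 = 2 * (a + d) + 4) :
    ∀ n : ℕ, 1 ≤ n → (!![a, b; c, d] : Matrix (Fin 2) (Fin 2) ℂ) ^ n ≠ 1 := by
  intro n hn hM
  obtain ⟨m, rfl⟩ : ∃ m, n = m + 1 := ⟨n - 1, by omega⟩
  set M : Matrix (Fin 2) (Fin 2) ℂ := !![a, b; c, d] with hMdef
  set u : ℕ → ℂ := fun k => ((BtildePQ k).1 : ℂ) + ((BtildePQ k).2 : ℂ) * (a + d) with hu
  have hM2 : M ^ 2 = (a + d) • M - 1 := by
    ext i j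
    fin_cases i <;> fin_cases j <;>
      simp [hMdef, pow_two, Matrix.mul_apply, Fin.sum_univ_two, Matrix.sub_apply,
        Matrix.smul_apply, Matrix.one_apply, smul_eq_mul] <;>
      first | ring1 | linear_combination -hdet
  have hpow : ∀ k : ℕ, M ^ (k+1) = u (k+1) • M - u k • 1 := by
    intro k
    induction k with
    | zero => simp [hu, BtildePQ]
    | succ k ih =>
      have hurec : u (k+2) = u (k+1) * (a + d) - u k := by
        show u (k+1+1) = _
        simp only [hu, BtildePQ]
        push_cast
        linear_combination (-((BtildePQ (k+1)).2 : ℂ)) * hT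
      calc M ^ (k+2) = M ^ (k+1) * M := by rw [pow_succ]
        _ = (u (k+1) • M - u k • 1) * M := by rw [ih]
        _ = u (k+1) • (M * M) - u k • M := by
            rw [sub_mul, smul_mul_assoc, smul_mul_assoc, one_mul]
        _ = u (k+1) • ((a + d) • M - 1) - u k • M := by rw [← pow_two, hM2]
        _ = (u (k+1) * (a + d) - u k) • M - u (k+1) • 1 := by
            rw [smul_sub, smul_smul, sub_smul]; abel
        _ = u (k+2) • M - u (k+1) • 1 := by rw [hurec]
  have key := hpow m
  rw [hM] at key
  -- key : 1 = u (m+1) • M - u m • 1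
  rw [Matrix.one_fin_two] at key
  have e00 := congrFun (congrFun key 0) 0
  have e01 := congrFun (congrFun key 0) 1
  have e10 := congrFun (congrFun key 1) 0
  have e11 := congrFun (congrFun key 1) 1
  simp only [hMdef, Matrix.sub_apply, Matrix.smul_apply, smul_eq_mul, Matrix.cons_val',
    Matrix.cons_val_zero, Matrix.cons_val_one, Matrix.head_cons, Matrix.head_fin_const,
    Matrix.empty_val', Matrix.cons_val_fin_one, Matrix.of_apply, mul_zero, mul_one,
    sub_zero] at e00 e01 e10 e11
  set U : ℂ := u (m+1) with hU
  -- e00 : 1 = U * a - u m , e01 : 0 = U * b , e10 : 0 = U * c , e11 : 1 = U * d - u m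
  have hUT : U * (a + d) = 2 * (1 + u m) := by linear_combination (-1 : ℂ) * e00 + (-1 : ℂ) * e11
  have hK2 : (1 + u m) ^ 2 = U ^ 2 := by
    linear_combination (U * d) * e00 + (1 + u m) * e11 + U ^ 2 * hdet - (U * c) * e01
  have hU2T : U ^ 2 * (a + d) = 0 := by
    linear_combination (2 : ℂ) * hK2 + ((U * (a + d) + 2 * (1 + u m)) / 2) * hUT
      - (U ^ 2 / 2) * hT
  have hTne : a + d ≠ 0 := by
    intro h
    rw [h] at hT
    norm_num at hT
  have hU0 : U = 0 := by
    rcases mul_eq_zero.mp hU2T with h | h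
    · exact pow_eq_zero_iff (by norm_num) |>.mp h
    · exact absurd h hTne
  -- Now U = p + q (a+d) = 0 with p q integers forces p = q = 0.
  set p : ℤ := (BtildePQ (m+1)).1 with hp
  set q : ℤ := (BtildePQ (m+1)).2 with hq
  have hU0' : (p : ℂ) + (q : ℂ) * (a + d) = 0 := hU0
  have hpq : (((p + q) ^ 2 : ℤ) : ℂ) = ((5 * q ^ 2 : ℤ) : ℂ) := by
    push_cast
    linear_combination ((p : ℂ) + 2 * q - q * (a + d)) * hU0' + (q : ℂ) ^ 2 * hT
  have hpqZ : (p + q) ^ 2 = 5 * q ^ 2 := by exact_mod_cast hpq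
  have hq0 : q = 0 := by
    by_contra hqne
    have h5irr : Irrational (Real.sqrt 5) := by
      have h5 : Nat.Prime 5 := by norm_num
      simpa using h5.irrational_sqrt
    have hqR : (q : ℝ) ≠ 0 := Int.cast_ne_zero.mpr hqne
    set r : ℚ := |(p : ℚ) + q| / |(q : ℚ)| with hr
    have hrR : ((r : ℝ)) ^ 2 = 5 := by
      have hcast : ((p : ℝ) + q) ^ 2 = 5 * (q : ℝ) ^ 2 := by exact_mod_cast hpqZ
      rw [hr]
      push_cast
      rw [div_pow, _root_.sq_abs, _root_.sq_abs, hcast]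
      field_simp
    have hrnn : (0 : ℝ) ≤ (r : ℝ) := by
      rw [hr]; push_cast; positivity
    have : Real.sqrt 5 = (r : ℝ) := by
      rw [← hrR, Real.sqrt_sq hrnn]
    exact h5irr ⟨r, this.symm⟩
  have hp0 : p = 0 := by
    rw [hq0] at hU0'
    push_cast at hU0'
    have hpc : (p : ℂ) = 0 := by linear_combination hU0'
    exact_mod_cast hpc
  have hw1 : 1 ≤ BtildeW (m+1) := (BtildeW_grow m).2.2
  rw [BtildeW, ← hp, ← hq, hp0, hq0] at hw1
  norm_num at hw1

/-- The matrix `B̃` (with `ζ = e^{2πi/60}`) has infinite order in `GL₂(ℂ)`: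
`B̃^n ≠ 1` for every `n ≥ 1`. -/
theorem Btilde_infinite_order :
    let ζ : ℂ := Complex.exp (2 * Real.pi * Complex.I / 60)
    let B : Matrix (Fin 2) (Fin 2) ℂ :=
      !![2 * ζ ^ 10 - 1, -4 * ζ ^ 10 - 2 * ζ ^ 8 + 2 * ζ ^ 2;
        -ζ ^ 14 + ζ ^ 8 + ζ ^ 6 + ζ ^ 4 - ζ ^ 2 - 1,
        2 * ζ ^ 14 - 2 * ζ ^ 10 - 2 * ζ ^ 6 - 2 * ζ ^ 4 + 3]
    ∀ n : ℕ, 1 ≤ n → B ^ n ≠ 1 := by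
  intro ζ B n hn
  have hζ : ζ = Complex.exp (2 * Real.pi * Complex.I / 60) := rfl
  have hπ : (Real.pi : ℂ) ≠ 0 := Complex.ofReal_ne_zero.mpr Real.pi_ne_zero
  -- ζ^30 = -1
  have h1 : ζ ^ 30 = -1 := by
    rw [hζ, ← Complex.exp_nat_mul]
    rw [show ((30 : ℕ) : ℂ) * (2 * (Real.pi : ℂ) * Complex.I / 60) = Real.pi * Complex.I by
      push_cast; ring]
    exact Complex.exp_pi_mul_I
  have h60 : ζ ^ 60 = 1 := by
    rw [hζ, ← Complex.exp_nat_mul]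
    rw [show ((60 : ℕ) : ℂ) * (2 * (Real.pi : ℂ) * Complex.I / 60) = 2 * Real.pi * Complex.I by
      push_cast; ring]
    exact Complex.exp_two_pi_mul_I
  -- ζ^20 is a primitive cube root of unity
  have h20ne : ζ ^ 20 ≠ 1 := by
    rw [hζ, ← Complex.exp_nat_mul]
    intro h
    obtain ⟨k, hk⟩ := Complex.exp_eq_one_iff.mp h
    have hz : (2 * (Real.pi : ℂ) * Complex.I) * (((20 : ℕ) : ℂ) / 60 - k) = 0 := by
      linear_combination hk
    rcases mul_eq_zero.mp hz with h' | h'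
    · exact (by simp [hπ, Complex.I_ne_zero] at h' : False)
    · have : (3 : ℂ) * k = 1 := by push_cast at h' ⊢; linear_combination (-3 : ℂ) * h'
      have : (3 : ℤ) * k = 1 := by exact_mod_cast this
      omega
  have h2 : ζ ^ 40 + ζ ^ 20 + 1 = 0 := by
    have hfac : (ζ ^ 20 - 1) * (ζ ^ 40 + ζ ^ 20 + 1) = 0 := by linear_combination h60
    rcases mul_eq_zero.mp hfac with h | h
    · exact absurd (by linear_combination h) h20ne
    · exact h
  -- ζ^12 is a primitive fifth root of unity
  have h12ne : ζ ^ 12 ≠ 1 := by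
    rw [hζ, ← Complex.exp_nat_mul]
    intro h
    obtain ⟨k, hk⟩ := Complex.exp_eq_one_iff.mp h
    have hz : (2 * (Real.pi : ℂ) * Complex.I) * (((12 : ℕ) : ℂ) / 60 - k) = 0 := by
      linear_combination hk
    rcases mul_eq_zero.mp hz with h' | h'
    · exact (by simp [hπ, Complex.I_ne_zero] at h' : False)
    · have : (5 : ℂ) * k = 1 := by push_cast at h' ⊢; linear_combination (-5 : ℂ) * h'
      have : (5 : ℤ) * k = 1 := by exact_mod_cast this
      omega
  have h3 : ζ ^ 48 + ζ ^ 36 + ζ ^ 24 + ζ ^ 12 + 1 = 0 := by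
    have hfac : (ζ ^ 12 - 1) * (ζ ^ 48 + ζ ^ 36 + ζ ^ 24 + ζ ^ 12 + 1) = 0 := by
      linear_combination h60
    rcases mul_eq_zero.mp hfac with h | h
    · exact absurd (by linear_combination h) h12ne
    · exact h
  -- determinant is 1
  have hdet : (2 * ζ ^ 10 - 1) * (2 * ζ ^ 14 - 2 * ζ ^ 10 - 2 * ζ ^ 6 - 2 * ζ ^ 4 + 3)
      - (-4 * ζ ^ 10 - 2 * ζ ^ 8 + 2 * ζ ^ 2)
        * (-ζ ^ 14 + ζ ^ 8 + ζ ^ 6 + ζ ^ 4 - ζ ^ 2 - 1) = 1 := by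
    linear_combination ((4:ℂ) * ζ^10 - (6:ℂ) * ζ^12 + (2:ℂ) * ζ^14 - (2:ℂ) * ζ^16 + (2:ℂ) * ζ^18 + (4:ℂ) * ζ^20 - (4:ℂ) * ζ^22 - (2:ℂ) * ζ^24 - (4:ℂ) * ζ^28 + (2:ℂ) * ζ^30 + (4:ℂ) * ζ^32 - (4:ℂ) * ζ^34 - (2:ℂ) * ζ^36 - (4:ℂ) * ζ^40 + (6:ℂ) * ζ^42 - (2:ℂ) * ζ^44 - (2:ℂ) * ζ^46) * h1 +
      ((-4:ℂ) + (6:ℂ) * ζ^2 - (2:ℂ) * ζ^4 + (2:ℂ) * ζ^6 - (2:ℂ) * ζ^8 - (4:ℂ) * ζ^10 + (4:ℂ) * ζ^12 + (2:ℂ) * ζ^14 + (4:ℂ) * ζ^18 - (2:ℂ) * ζ^20 - (4:ℂ) * ζ^22 + (4:ℂ) * ζ^24 + (2:ℂ) * ζ^26 + (4:ℂ) * ζ^30 - (6:ℂ) * ζ^32 + (2:ℂ) * ζ^34 + (2:ℂ) * ζ^36) * h2 +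
      ((-4:ℂ) * ζ^2 + (6:ℂ) * ζ^4 - (2:ℂ) * ζ^6 - (2:ℂ) * ζ^8) * h3
  -- trace satisfies T² = 2T + 4
  have hT : ((2 * ζ ^ 10 - 1) + (2 * ζ ^ 14 - 2 * ζ ^ 10 - 2 * ζ ^ 6 - 2 * ζ ^ 4 + 3)) ^ 2
      = 2 * ((2 * ζ ^ 10 - 1) + (2 * ζ ^ 14 - 2 * ζ ^ 10 - 2 * ζ ^ 6 - 2 * ζ ^ 4 + 3)) + 4 := by
    linear_combination ((4:ℂ) * ζ^10 - (4:ℂ) * ζ^12 + (8:ℂ) * ζ^14 - (4:ℂ) * ζ^16 - (4:ℂ) * ζ^18 - (12:ℂ) * ζ^22 + (4:ℂ) * ζ^24 - (4:ℂ) * ζ^28 + (4:ℂ) * ζ^30 - (4:ℂ) * ζ^32 - (8:ℂ) * ζ^34 + (4:ℂ) * ζ^36 - (4:ℂ) * ζ^40 + (8:ℂ) * ζ^42 - (8:ℂ) * ζ^44 + (4:ℂ) * ζ^48 - (4:ℂ) * ζ^50 + (4:ℂ) * ζ^52) * h1 +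
      ((-4:ℂ) + (4:ℂ) * ζ^2 - (8:ℂ) * ζ^4 + (4:ℂ) * ζ^6 + (4:ℂ) * ζ^8 + (12:ℂ) * ζ^12 - (4:ℂ) * ζ^14 + (4:ℂ) * ζ^18 - (4:ℂ) * ζ^20 + (4:ℂ) * ζ^22 + (8:ℂ) * ζ^24 - (4:ℂ) * ζ^26 + (4:ℂ) * ζ^30 - (8:ℂ) * ζ^32 + (8:ℂ) * ζ^34 - (4:ℂ) * ζ^38 + (4:ℂ) * ζ^40 - (4:ℂ) * ζ^42) * h2 +
      ((-4:ℂ) * ζ^2 + (4:ℂ) * ζ^4 - (8:ℂ) * ζ^6 + (4:ℂ) * ζ^10 - (4:ℂ) * ζ^12 + (4:ℂ) * ζ^14) * h3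
  exact Btilde_aux _ _ _ _ hdet hT n hn
end
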